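/- arXiv:1605.08392 — 7 statements merged into one kernel-verified Lean document; each statement's English description precedes it below -/
import Mathlib

section
/- For all t in [0, π], 2 - cos t ≥ cosh(t/4). -/
/-!
Jordan's inequality gives `cos t ≤ 1 - 2 t² / π²` on `[0, π]`, while `cosh x ≤ 1 + x²` for
`|x| ≤ 1`. At `x = t / 4` the second bound is `1 + t² / 16`, and `1 / 16 ≤ 2 / π²` since `π ≤ 4`.
-/

open Real

lemma exp_le_one_add_two_mul {y : ℝ} (hy₀ : 0 ≤ y) (hy₁ : y ≤ 1 / 2) : exp y ≤ 1 + 2 * y :=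
  calc exp y ≤ 1 / (1 - y) := exp_bound_div_one_sub_of_interval hy₀ (by linarith)
    _ ≤ 1 + 2 * y := by
      rw [div_le_iff₀ (by linarith)]
      nlinarith

lemma cosh_le_one_add_sq {x : ℝ} (hx : x ^ 2 ≤ 1) : cosh x ≤ 1 + x ^ 2 :=
  calc cosh x ≤ exp (x ^ 2 / 2) := cosh_le_exp_half_sq x
    _ ≤ 1 + 2 * (x ^ 2 / 2) := exp_le_one_add_two_mul (by positivity) (by linarith)
    _ = 1 + x ^ 2 := by ring

/-- For all `t ∈ [0, π]`, `2 - cos t ≥ cosh (t/4)`. -/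
theorem two_sub_cos_ge_cosh_quarter :
    ∀ t ∈ Set.Icc (0 : ℝ) Real.pi, Real.cosh (t / 4) ≤ 2 - Real.cos t := by
  rintro t ⟨ht₀, htπ⟩
  have hcos : cos t ≤ 1 - 2 / π ^ 2 * t ^ 2 :=
    cos_le_one_sub_mul_cos_sq (by rwa [abs_of_nonneg ht₀])
  have ht₄ : t ≤ 4 := htπ.trans pi_le_four
  have hcosh : cosh (t / 4) ≤ 1 + (t / 4) ^ 2 := cosh_le_one_add_sq (by nlinarith)
  have hcoef : (t / 4) ^ 2 ≤ 2 / π ^ 2 * t ^ 2 := by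
    have hπ_sq : π ^ 2 ≤ 16 := by nlinarith [pi_pos, pi_le_four]
    rw [div_mul_eq_mul_div, le_div_iff₀ (by positivity)]
    nlinarith [sq_nonneg t]
  linarith
end

section
/- Let x_1, …, x_n be unit vectors in a real Hilbert space H with |⟨x_i, x_{i'}⟩| ≤ A_1 ρ^{|i - i'|} for all i ≠ i', where 0 < ρ < 1/4 and A_1 ρ < 0.1. Let ε_i = x_i − (orthogonal projection of x_i onto span(x_1,…,x_{i−1})). Then for every i, 1 ≥ ‖ε_i‖^2 ≥ 1 − 4 A_1^2 ρ^2/(1 − ρ^2). -/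
/-!
Write `x_i = v + ε_i`, where `v = ∑_{j<i} c_j x_j` is the projection of `x_i` onto the span of
the earlier vectors, so that `‖ε_i‖² = 1 - ‖v‖²`. The off-diagonal row sums of the Gram matrix
of `x_0, …, x_{i-1}` are at most `δ = 2A₁ρ/(1-ρ) ≤ 3/4`, so `‖v‖² ≥ (1-δ) ∑ c_j²`. On the other
hand `‖v‖² = ⟪v, x_i⟫ = ∑ c_j ⟪x_j, x_i⟫`, and Cauchy–Schwarz together with the geometric decay
of `⟪x_j, x_i⟫` gives `‖v‖⁴ ≤ ∑ c_j² · A₁²ρ²/(1-ρ²)`. Hence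
`‖v‖² ≤ (1-δ)⁻¹ A₁²ρ²/(1-ρ²) ≤ 4A₁²ρ²/(1-ρ²)`.
-/

open RealInnerProductSpace Finset

section Geometric

variable {r : ℝ}

theorem sum_pow_le_div_one_sub_of_pos (hr0 : 0 ≤ r) (hr1 : r < 1) {s : Finset ℕ}
    (hs : ∀ m ∈ s, 0 < m) : ∑ m ∈ s, r ^ m ≤ r / (1 - r) := by
  have hle := (summable_geometric_of_lt_one hr0 hr1).sum_le_tsum (insert 0 s)
    (fun m _ => pow_nonneg hr0 m)
  rw [sum_insert fun h => (hs 0 h).ne rfl, tsum_geometric_of_lt_one hr0 hr1, pow_zero] at hle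
  have h1r : 0 < 1 - r := by linarith
  have hmul : (1 + ∑ m ∈ s, r ^ m) * (1 - r) ≤ 1 :=
    calc _ ≤ (1 - r)⁻¹ * (1 - r) := by gcongr
      _ = 1 := inv_mul_cancel₀ h1r.ne'
  rw [le_div_iff₀ h1r]
  linarith

theorem sum_pow_comp_le_div_one_sub {ι : Type*} (hr0 : 0 ≤ r) (hr1 : r < 1) {s : Finset ι}
    {e : ι → ℕ} (he : Set.InjOn e s) (hpos : ∀ k ∈ s, 0 < e k) :
    ∑ k ∈ s, r ^ e k ≤ r / (1 - r) := by
  classical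
  rw [← sum_image he]
  exact sum_pow_le_div_one_sub_of_pos hr0 hr1 (by simpa using hpos)

theorem sum_erase_pow_natAbs_sub_le (hr0 : 0 ≤ r) (hr1 : r < 1) (s : Finset ℕ) (j : ℕ) :
    ∑ k ∈ s.erase j, r ^ ((j : ℤ) - k).natAbs ≤ 2 * r / (1 - r) := by
  rw [← sum_filter_add_sum_filter_not _ (· < j), two_mul, add_div]
  gcongr <;>
  · refine sum_pow_comp_le_div_one_sub hr0 hr1 ?_ ?_
    · intro a ha b hb hab
      simp only [coe_filter, mem_erase, Set.mem_ofPred_eq] at ha hb hab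
      omega
    · intro k hk
      simp only [mem_filter, mem_erase] at hk
      omega

variable {A : ℝ}

theorem sum_erase_le_of_le_mul_pow_natAbs (hA : 0 ≤ A) (hr0 : 0 ≤ r) (hr1 : r < 1)
    {s : Finset ℕ} {j : ℕ} {a : ℕ → ℝ} (ha : ∀ k ∈ s.erase j, a k ≤ A * r ^ ((j : ℤ) - k).natAbs) :
    ∑ k ∈ s.erase j, a k ≤ A * (2 * r / (1 - r)) :=
  calc ∑ k ∈ s.erase j, a k ≤ A * ∑ k ∈ s.erase j, r ^ ((j : ℤ) - k).natAbs := by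
        rw [mul_sum]; exact sum_le_sum ha
    _ ≤ A * (2 * r / (1 - r)) := by grw [sum_erase_pow_natAbs_sub_le hr0 hr1]

theorem sum_range_sq_le_of_abs_le_mul_pow_natAbs (hr0 : 0 ≤ r) (hr1 : r < 1) {i : ℕ}
    {a : ℕ → ℝ} (ha : ∀ j < i, |a j| ≤ A * r ^ ((j : ℤ) - i).natAbs) :
    ∑ j ∈ range i, a j ^ 2 ≤ A ^ 2 * (r ^ 2 / (1 - r ^ 2)) :=
  calc ∑ j ∈ range i, a j ^ 2 ≤ A ^ 2 * ∑ j ∈ range i, (r ^ 2) ^ ((j : ℤ) - i).natAbs := by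
        rw [mul_sum]
        refine sum_le_sum fun j hj => ?_
        rw [← pow_mul, mul_comm 2, pow_mul, ← mul_pow, ← sq_abs]
        exact pow_le_pow_left₀ (abs_nonneg _) (ha j (mem_range.1 hj)) 2
    _ ≤ A ^ 2 * (r ^ 2 / (1 - r ^ 2)) := by
        refine mul_le_mul_of_nonneg_left (sum_pow_comp_le_div_one_sub (sq_nonneg r)
          (by nlinarith) (fun a ha b hb hab => ?_) fun j hj => ?_) (sq_nonneg _)
        · simp only [coe_range, Set.mem_Iio] at ha hb hab
          omega
        · simp only [mem_range] at hj
          omega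

end Geometric

section Gram

variable {H ι : Type*} [NormedAddCommGroup H] [InnerProductSpace ℝ H]

theorem norm_sq_sum_smul (s : Finset ι) (c : ι → ℝ) (u : ι → H) :
    ‖∑ j ∈ s, c j • u j‖ ^ 2 = ∑ j ∈ s, ∑ k ∈ s, c j * c k * ⟪u j, u k⟫ := by
  simp_rw [← real_inner_self_eq_norm_sq, sum_inner, inner_sum, real_inner_smul_left,
    real_inner_smul_right, mul_assoc]

variable [DecidableEq ι] {s : Finset ι} {u : ι → H} {δ : ℝ}

theorem sum_sum_erase_sq_mul_abs_inner_swap (c : ι → ℝ) :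
    ∑ j ∈ s, ∑ k ∈ s.erase j, c k ^ 2 * |⟪u j, u k⟫| =
      ∑ j ∈ s, c j ^ 2 * ∑ k ∈ s.erase j, |⟪u j, u k⟫| := by
  rw [sum_comm' (t' := s) (s' := s.erase) fun j k => by
    simp only [mem_erase]; tauto]
  simp_rw [mul_sum, real_inner_comm]

theorem one_sub_mul_sum_sq_le_norm_sq_sum_smul (hu : ∀ j ∈ s, ‖u j‖ = 1)
    (hrow : ∀ j ∈ s, ∑ k ∈ s.erase j, |⟪u j, u k⟫| ≤ δ) (c : ι → ℝ) :
    (1 - δ) * ∑ j ∈ s, c j ^ 2 ≤ ‖∑ j ∈ s, c j • u j‖ ^ 2 := by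
  have hdiag : ‖∑ j ∈ s, c j • u j‖ ^ 2 =
      ∑ j ∈ s, c j ^ 2 + ∑ j ∈ s, ∑ k ∈ s.erase j, c j * c k * ⟪u j, u k⟫ := by
    rw [norm_sq_sum_smul, ← sum_add_distrib]
    refine sum_congr rfl fun j hj => ?_
    rw [← add_sum_erase _ _ hj, real_inner_self_eq_norm_sq, hu j hj]
    ring
  have hrow' : ∑ j ∈ s, c j ^ 2 * ∑ k ∈ s.erase j, |⟪u j, u k⟫| ≤ δ * ∑ j ∈ s, c j ^ 2 := by
    rw [mul_sum]
    refine sum_le_sum fun j hj => ?_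
    rw [mul_comm δ]
    exact mul_le_mul_of_nonneg_left (hrow j hj) (sq_nonneg _)
  -- AM-GM on `|c_j c_k|`; its two halves have equal sums because the Gram matrix is symmetric.
  have hoff : -(δ * ∑ j ∈ s, c j ^ 2) ≤
      ∑ j ∈ s, ∑ k ∈ s.erase j, c j * c k * ⟪u j, u k⟫ := by
    have hamgm : ∀ j k, -((c j ^ 2 + c k ^ 2) / 2 * |⟪u j, u k⟫|) ≤ c j * c k * ⟪u j, u k⟫ := by
      intro j k
      have := neg_abs_le ⟪u j, u k⟫
      have := le_abs_self ⟪u j, u k⟫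
      nlinarith [sq_nonneg (c j - c k), sq_nonneg (c j + c k), abs_nonneg ⟪u j, u k⟫]
    calc -(δ * ∑ j ∈ s, c j ^ 2)
        ≤ -(∑ j ∈ s, c j ^ 2 * ∑ k ∈ s.erase j, |⟪u j, u k⟫|) := neg_le_neg hrow'
      _ = ∑ j ∈ s, ∑ k ∈ s.erase j, -((c j ^ 2 + c k ^ 2) / 2 * |⟪u j, u k⟫|) := by
        simp_rw [add_div, add_mul, sum_neg_distrib, sum_add_distrib, div_mul_eq_mul_div, ← sum_div,
          sum_sum_erase_sq_mul_abs_inner_swap, ← mul_sum]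
        ring
      _ ≤ _ := by gcongr with j _ k _; exact hamgm j k
  rw [hdiag]
  linarith

theorem one_sub_mul_norm_sq_le_sum_inner_sq (hu : ∀ j ∈ s, ‖u j‖ = 1)
    (hrow : ∀ j ∈ s, ∑ k ∈ s.erase j, |⟪u j, u k⟫| ≤ δ) {v w : H}
    (hv : v ∈ Submodule.span ℝ (u '' s)) (horth : ⟪w - v, v⟫ = 0) :
    (1 - δ) * ‖v‖ ^ 2 ≤ ∑ j ∈ s, ⟪u j, w⟫ ^ 2 := by
  obtain ⟨c, rfl⟩ := (Submodule.mem_span_image_finset_iff_exists_fun' (R := ℝ)).mp hv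
  set v := ∑ j ∈ s, c j • u j
  have hvw : ∑ j ∈ s, c j * ⟪u j, w⟫ = ‖v‖ ^ 2 := by
    rw [inner_sub_left, real_inner_self_eq_norm_sq, real_inner_comm, sum_inner] at horth
    simp_rw [real_inner_smul_left] at horth
    linarith
  have hcs : (‖v‖ ^ 2) ^ 2 ≤ (∑ j ∈ s, c j ^ 2) * ∑ j ∈ s, ⟪u j, w⟫ ^ 2 :=
    hvw ▸ sum_mul_sq_le_sq_mul_sq s c _
  have hgram := one_sub_mul_sum_sq_le_norm_sq_sum_smul hu hrow c
  have hC : 0 ≤ ∑ j ∈ s, ⟪u j, w⟫ ^ 2 := sum_nonneg fun j _ => sq_nonneg _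
  rcases (sq_nonneg ‖v‖).eq_or_lt with hv0 | hvpos
  · rw [← hv0, mul_zero]; exact hC
  rcases le_or_gt δ 1 with hδ | hδ
  · refine le_of_mul_le_mul_left ?_ hvpos
    nlinarith [mul_le_mul_of_nonneg_right hgram hC]
  · nlinarith

end Gram

theorem gram_schmidt_residual_norm_bounds_general
    {H : Type*} [NormedAddCommGroup H] [InnerProductSpace ℝ H]
    (n : ℕ) (x ε : ℕ → H) (A₁ ρ : ℝ)
    (hρ0 : 0 < ρ) (hρ : ρ < 1 / 4) (hA₁ : 0 < A₁) (hA₁ρ : A₁ * ρ < 0.1)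
    (hunit : ∀ i < n, ‖x i‖ = 1)
    (hcorr : ∀ i < n, ∀ i' < n, i ≠ i' →
      |⟪x i, x i'⟫| ≤ A₁ * ρ ^ (Int.natAbs ((i : ℤ) - (i' : ℤ))))
    (hmem : ∀ i < n, x i - ε i ∈ Submodule.span ℝ (x '' {j | j < i}))
    (horth : ∀ i < n, ∀ y ∈ Submodule.span ℝ (x '' {j | j < i}), ⟪ε i, y⟫ = 0) :
    ∀ i < n, ‖ε i‖ ^ 2 ≤ 1 ∧ 1 - 4 * A₁ ^ 2 * ρ ^ 2 / (1 - ρ ^ 2) ≤ ‖ε i‖ ^ 2 := by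
  intro i hi
  have hv := hmem i hi
  have hpyth : ‖x i - ε i‖ ^ 2 + ‖ε i‖ ^ 2 = 1 := by
    have h := norm_add_sq_real (x i - ε i) (ε i)
    rw [sub_add_cancel, hunit i hi, real_inner_comm, horth i hi _ hv] at h
    linarith
  have hrow : ∀ j ∈ range i, ∑ k ∈ (range i).erase j, |⟪x j, x k⟫| ≤ A₁ * (2 * ρ / (1 - ρ)) :=
    fun j hj => sum_erase_le_of_le_mul_pow_natAbs hA₁.le hρ0.le (by linarith) fun k hk => by
      simp only [mem_erase, mem_range] at hj hk
      exact hcorr j (hj.trans hi) k (hk.2.trans hi) hk.1.symm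
  have hcol : ∑ j ∈ range i, ⟪x j, x i⟫ ^ 2 ≤ A₁ ^ 2 * (ρ ^ 2 / (1 - ρ ^ 2)) :=
    sum_range_sq_le_of_abs_le_mul_pow_natAbs hρ0.le (by linarith) fun j hj =>
      hcorr j (hj.trans hi) i hi hj.ne
  have hbessel := one_sub_mul_norm_sq_le_sum_inner_sq
    (fun j hj => hunit j ((mem_range.1 hj).trans hi)) hrow (by rwa [coe_range])
    (by rw [sub_sub_cancel]; exact horth i hi _ hv)
  have hδ : A₁ * (2 * ρ / (1 - ρ)) ≤ 3 / 4 := by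
    rw [mul_div_assoc', div_le_iff₀ (by linarith)]; nlinarith
  have hproj : ‖x i - ε i‖ ^ 2 / 4 ≤ A₁ ^ 2 * (ρ ^ 2 / (1 - ρ ^ 2)) := by
    nlinarith [mul_nonneg (sub_nonneg.2 hδ) (sq_nonneg ‖x i - ε i‖)]
  refine ⟨by linarith [sq_nonneg ‖x i - ε i‖], ?_⟩
  linarith [hpyth, show 4 * A₁ ^ 2 * ρ ^ 2 / (1 - ρ ^ 2) = 4 * (A₁ ^ 2 * (ρ ^ 2 / (1 - ρ ^ 2))) by ring]

/-- **Gram–Schmidt residuals of weakly correlated unit vectors are nearly unit.**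
Let `x_1, …, x_n` be unit vectors in a real Hilbert space with
`|⟨x_i, x_{i'}⟩| ≤ A_1 ρ^{|i - i'|}` for `i ≠ i'`, where `0 < ρ < 1/4` and
`A_1 ρ < 0.1`.  If `ε_i` denotes the Gram–Schmidt residual of `x_i`
(i.e. `x_i - ε_i` lies in the span of `x_1, …, x_{i-1}` and `ε_i` is orthogonal
to that span), then `1 ≥ ‖ε_i‖² ≥ 1 − 4A_1²ρ²/(1 − ρ²)` for every `i`. -/
theorem gram_schmidt_residual_norm_bounds
    {H : Type*} [NormedAddCommGroup H] [InnerProductSpace ℝ H] [CompleteSpace H]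
    (n : ℕ) (x ε : ℕ → H) (A₁ ρ : ℝ)
    (hρ0 : 0 < ρ) (hρ : ρ < 1 / 4) (hA₁ : 0 < A₁) (hA₁ρ : A₁ * ρ < 0.1)
    (hunit : ∀ i < n, ‖x i‖ = 1)
    (hcorr : ∀ i < n, ∀ i' < n, i ≠ i' →
      |⟪x i, x i'⟫| ≤ A₁ * ρ ^ (Int.natAbs ((i : ℤ) - (i' : ℤ))))
    (hmem : ∀ i < n, x i - ε i ∈ Submodule.span ℝ (x '' {j | j < i}))
    (horth : ∀ i < n, ∀ y ∈ Submodule.span ℝ (x '' {j | j < i}), ⟪ε i, y⟫ = 0) :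
    ∀ i < n, ‖ε i‖ ^ 2 ≤ 1 ∧ 1 - 4 * A₁ ^ 2 * ρ ^ 2 / (1 - ρ ^ 2) ≤ ‖ε i‖ ^ 2 :=
  gram_schmidt_residual_norm_bounds_general n x ε A₁ ρ hρ0 hρ hA₁ hA₁ρ hunit hcorr hmem horth
end

section
/- Under the hypotheses of the previous Gram–Schmidt lemma (unit vectors x_1,…,x_n with |⟨x_i,x_{i'}⟩| ≤ A_1 ρ^{|i−i'|}, 0 < ρ < 1/4, A_1 ρ < 0.1), write x_k = Σ_{i<k} a_{k,i} ε_i + ε_k for the Gram–Schmidt expansion. Then |a_{k,k'}| ≤ 2 A_1 ρ^{k − k'} for all 1 ≤ k' < k ≤ n. -/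
/-!
Expanding `x_{k'}` in the orthogonal residuals gives, for `k' ≤ k` and with `a_{k,k} = 1`,
`⟪x_k, x_{k'}⟫ = Σ_{i<k'} a_{k,i} a_{k',i} ‖ε_i‖² + a_{k,k'} ‖ε_{k'}‖²`,
i.e. the Gram matrix factors as `L D Lᵀ`. Induct on `(k, k')` lexicographically: the bounds
already known for rows `k` and `k'` make the sum at most `4 A² ρ^{k-k'} g` and force
`‖ε_{k'}‖² ≥ 1 - 4 A² g`, where `g = Σ_{i<k'} ρ^{2(k'-i)} ≤ 2ρ²`. Since `A ρ` is small,
solving for `a_{k,k'}` loses less than a factor `2` against `|⟪x_k, x_{k'}⟫| ≤ A ρ^{k-k'}`.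
-/

open RealInnerProductSpace Finset

theorem sum_range_pow_sub_le_two_mul {r : ℝ} (hr0 : 0 ≤ r) (hr : r ≤ 1 / 2) (m : ℕ) :
    ∑ i ∈ range m, r ^ (m - i) ≤ 2 * r := by
  induction m with
  | zero => simpa using hr0
  | succ m ih =>
    have hshift : ∀ i ∈ range m, r ^ (m + 1 - i) = r * r ^ (m - i) := fun i hi => by
      rw [← pow_succ', show m + 1 - i = m - i + 1 by have := mem_range.1 hi; omega]
    rw [sum_range_succ, sum_congr rfl hshift, ← mul_sum, Nat.add_sub_cancel_left, pow_one]
    nlinarith [mul_le_mul_of_nonneg_left ih hr0]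

theorem abs_sum_mul_mul_le {b c e : ℕ → ℝ} {C ρ : ℝ} {k k' : ℕ} (hk : k' ≤ k)
    (he : ∀ i < k', 0 ≤ e i ∧ e i ≤ 1)
    (hb : ∀ i < k', |b i| ≤ C * ρ ^ (k - i)) (hc : ∀ i < k', |c i| ≤ C * ρ ^ (k' - i)) :
    |∑ i ∈ range k', b i * c i * e i| ≤
      C ^ 2 * ρ ^ (k - k') * ∑ i ∈ range k', (ρ ^ 2) ^ (k' - i) := by
  rw [mul_sum]
  refine (abs_sum_le_sum_abs _ _).trans (sum_le_sum fun i hi => ?_)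
  have hi : i < k' := mem_range.1 hi
  obtain ⟨he0, he1⟩ := he i hi
  have hbC := (abs_nonneg _).trans (hb i hi)
  have hcC := (abs_nonneg _).trans (hc i hi)
  calc |b i * c i * e i| = |b i| * |c i| * e i := by rw [abs_mul, abs_mul, abs_of_nonneg he0]
    _ ≤ (C * ρ ^ (k - i)) * (C * ρ ^ (k' - i)) * 1 := by
      gcongr
      exacts [hb i hi, hc i hi]
    _ = C ^ 2 * ρ ^ (k - k') * (ρ ^ 2) ^ (k' - i) := by
      rw [show k - i = (k - k') + (k' - i) by omega, pow_add]
      ring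

theorem abs_le_two_mul_of_mul_le {c E A P δ : ℝ} (hA : 0 ≤ A) (hP : 0 ≤ P)
    (hδ : δ * (1 + 2 * A) ≤ A) (hE : 1 - δ ≤ E) (h : |c| * E ≤ A * P + δ * P) :
    |c| ≤ 2 * A * P := by
  have hδ1 : 0 < 1 - δ := by nlinarith
  refine le_of_mul_le_mul_right ?_ hδ1
  calc |c| * (1 - δ) ≤ |c| * E := by gcongr
    _ ≤ (A + δ) * P := by linarith
    _ ≤ 2 * A * (1 - δ) * P := by gcongr; linarith
    _ = 2 * A * P * (1 - δ) := by ring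

/-- Coefficient decay for a factorisation `G = L D Lᵀ`, where `L` is unit lower triangular
with entries `L k i = a k i` for `i < k` and `D` is the diagonal matrix with entries `e i`. -/
theorem abs_ldl_coeff_le (n : ℕ) (G a : ℕ → ℕ → ℝ) (e : ℕ → ℝ) (A ρ : ℝ)
    (hρ0 : 0 ≤ ρ) (hρ : ρ < 1 / 4) (hA : 0 ≤ A) (hAρ : A * ρ < 0.1)
    (he : ∀ i < n, 0 ≤ e i)
    (hdiag : ∀ m < n, ∑ i ∈ range m, a m i * a m i * e i + e m = 1)
    (hoff : ∀ k < n, ∀ k' < k, G k k' = ∑ i ∈ range k', a k i * a k' i * e i + a k k' * e k')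
    (hG : ∀ k < n, ∀ k' < k, |G k k'| ≤ A * ρ ^ (k - k')) :
    ∀ k < n, ∀ k' < k, |a k k'| ≤ 2 * A * ρ ^ (k - k') := by
  have he1 : ∀ m < n, e m ≤ 1 := fun m hm => by
    have : 0 ≤ ∑ i ∈ range m, a m i * a m i * e i :=
      sum_nonneg fun i hi => mul_nonneg (mul_self_nonneg _) (he i (by simp at hi; omega))
    linarith [hdiag m hm]
  have hδ : ∀ g ≤ 2 * ρ ^ 2, (2 * A) ^ 2 * g * (1 + 2 * A) ≤ A := fun g hg =>
    calc (2 * A) ^ 2 * g * (1 + 2 * A) ≤ (2 * A) ^ 2 * (2 * ρ ^ 2) * (1 + 2 * A) := by gcongr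
      _ = A * (8 * (A * ρ) * ρ + 16 * (A * ρ) ^ 2) := by ring
      _ ≤ A * 1 := by gcongr; nlinarith [mul_nonneg hA hρ0]
      _ = A := mul_one A
  intro k
  refine Nat.strong_induction_on k fun k ihk hk k' => ?_
  refine Nat.strong_induction_on k' fun k' ihk' hk'k => ?_
  have hk'n : k' < n := hk'k.trans hk
  have heb : ∀ i < k', 0 ≤ e i ∧ e i ≤ 1 := fun i hi => ⟨he i (by omega), he1 i (by omega)⟩
  have hrow : ∀ i < k', |a k i| ≤ 2 * A * ρ ^ (k - i) := fun i hi => ihk' i hi (hi.trans hk'k)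
  have hrow' : ∀ i < k', |a k' i| ≤ 2 * A * ρ ^ (k' - i) := fun i hi => ihk k' hk'k hk'n i hi
  set g := ∑ i ∈ range k', (ρ ^ 2) ^ (k' - i)
  have hg : g ≤ 2 * ρ ^ 2 := sum_range_pow_sub_le_two_mul (sq_nonneg ρ) (by nlinarith) k'
  have hdefect : ∑ i ∈ range k', a k' i * a k' i * e i ≤ (2 * A) ^ 2 * g := by
    simpa using (abs_le.1 (abs_sum_mul_mul_le le_rfl heb hrow' hrow')).2
  have hcross := abs_sum_mul_mul_le hk'k.le heb hrow hrow'
  refine abs_le_two_mul_of_mul_le hA (pow_nonneg hρ0 _) (hδ g hg) (E := e k') ?_ ?_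
  · linarith [hdiag k' hk'n]
  · calc |a k k'| * e k' = |G k k' - ∑ i ∈ range k', a k i * a k' i * e i| := by
          rw [hoff k hk k' hk'k, add_sub_cancel_left, abs_mul, abs_of_nonneg (he k' hk'n)]
      _ ≤ |G k k'| + |∑ i ∈ range k', a k i * a k' i * e i| := abs_sub _ _
      _ ≤ A * ρ ^ (k - k') + (2 * A) ^ 2 * g * ρ ^ (k - k') := by
          linarith [hG k hk k' hk'k]

section Residuals

variable {H : Type*} [NormedAddCommGroup H] [InnerProductSpace ℝ H] {n : ℕ} {x ε : ℕ → H}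
  {a : ℕ → ℕ → ℝ}

theorem inner_residual_eq_zero
    (hmem : ∀ i < n, x i - ε i ∈ Submodule.span ℝ (x '' {j | j < i}))
    (horth : ∀ i < n, ∀ y ∈ Submodule.span ℝ (x '' {j | j < i}), ⟪ε i, y⟫ = 0)
    {i j : ℕ} (hi : i < n) (hj : j < n) (hij : i ≠ j) : ⟪ε i, ε j⟫ = 0 := by
  wlog hji : j < i generalizing i j
  · rw [real_inner_comm]
    exact this hj hi hij.symm (by omega)
  have hspan : Submodule.span ℝ (x '' {l | l < j}) ≤ Submodule.span ℝ (x '' {l | l < i}) :=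
    Submodule.span_mono (Set.image_mono fun l hl => lt_trans hl hji)
  apply horth i hi
  rw [← sub_sub_cancel (x j) (ε j)]
  exact sub_mem (Submodule.subset_span ⟨j, hji, rfl⟩) (hspan (hmem j hj))

theorem inner_expansion_residual_of_lt (hε : ∀ i < n, ∀ j < n, i ≠ j → ⟪ε i, ε j⟫ = 0)
    (hexp : ∀ k < n, x k = (∑ i ∈ range k, a k i • ε i) + ε k)
    {m i : ℕ} (hm : m < n) (hi : i < m) : ⟪x m, ε i⟫ = a m i * ‖ε i‖ ^ 2 := by
  rw [hexp m hm, inner_add_left, sum_inner, hε m hm i (hi.trans hm) hi.ne', add_zero,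
    sum_eq_single_of_mem i (mem_range.2 hi), real_inner_smul_left, real_inner_self_eq_norm_sq]
  intro j hj hji
  rw [real_inner_smul_left, hε j ((mem_range.1 hj).trans hm) i (hi.trans hm) hji, mul_zero]

theorem inner_expansion_residual_self (hε : ∀ i < n, ∀ j < n, i ≠ j → ⟪ε i, ε j⟫ = 0)
    (hexp : ∀ k < n, x k = (∑ i ∈ range k, a k i • ε i) + ε k)
    {m : ℕ} (hm : m < n) : ⟪x m, ε m⟫ = ‖ε m‖ ^ 2 := by
  rw [hexp m hm, inner_add_left, sum_inner, real_inner_self_eq_norm_sq, add_eq_right]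
  refine sum_eq_zero fun j hj => ?_
  have hj : j < m := mem_range.1 hj
  rw [real_inner_smul_left, hε j (hj.trans hm) m hm hj.ne, mul_zero]

theorem inner_expansion_of_le (hε : ∀ i < n, ∀ j < n, i ≠ j → ⟪ε i, ε j⟫ = 0)
    (hexp : ∀ k < n, x k = (∑ i ∈ range k, a k i • ε i) + ε k)
    {m m' : ℕ} (hm : m < n) (hm' : m' ≤ m) :
    ⟪x m, x m'⟫ = ∑ i ∈ range m', a m i * a m' i * ‖ε i‖ ^ 2 + ⟪x m, ε m'⟫ := by
  rw [hexp m' (hm'.trans_lt hm), inner_add_right, inner_sum]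
  congr 1
  refine sum_congr rfl fun i hi => ?_
  rw [real_inner_smul_right,
    inner_expansion_residual_of_lt hε hexp hm ((mem_range.1 hi).trans_le hm')]
  ring

end Residuals

theorem gram_schmidt_coefficient_bound_general
    {H : Type*} [NormedAddCommGroup H] [InnerProductSpace ℝ H]
    (n : ℕ) (x ε : ℕ → H) (a : ℕ → ℕ → ℝ) (A₁ ρ : ℝ)
    (hρ0 : 0 < ρ) (hρ : ρ < 1 / 4) (hA₁ : 0 < A₁) (hA₁ρ : A₁ * ρ < 0.1)
    (hunit : ∀ i < n, ‖x i‖ = 1)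
    (hcorr : ∀ i < n, ∀ i' < n, i ≠ i' →
      |⟪x i, x i'⟫| ≤ A₁ * ρ ^ (Int.natAbs ((i : ℤ) - (i' : ℤ))))
    (hmem : ∀ i < n, x i - ε i ∈ Submodule.span ℝ (x '' {j | j < i}))
    (horth : ∀ i < n, ∀ y ∈ Submodule.span ℝ (x '' {j | j < i}), ⟪ε i, y⟫ = 0)
    (hexp : ∀ k < n, x k = (∑ i ∈ Finset.range k, a k i • ε i) + ε k) :
    ∀ k < n, ∀ k' < k, |a k k'| ≤ 2 * A₁ * ρ ^ (k - k') := by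
  have hε := fun i (hi : i < n) j (hj : j < n) => inner_residual_eq_zero hmem horth hi hj
  refine abs_ldl_coeff_le n (fun k k' => ⟪x k, x k'⟫) a (fun i => ‖ε i‖ ^ 2) A₁ ρ hρ0.le hρ
    hA₁.le hA₁ρ (fun _ _ => sq_nonneg _) (fun m hm => ?_) (fun k hk k' hk' => ?_)
    (fun k hk k' hk' => ?_)
  · rw [← inner_expansion_residual_self hε hexp hm, ← inner_expansion_of_le hε hexp hm le_rfl,
      real_inner_self_eq_norm_sq, hunit m hm, one_pow]
  · rw [inner_expansion_of_le hε hexp hk hk'.le, inner_expansion_residual_of_lt hε hexp hk hk']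
  · simpa [show Int.natAbs ((k : ℤ) - k') = k - k' by omega] using
      hcorr k hk k' (hk'.trans hk) hk'.ne'

/-- **Gram–Schmidt expansion coefficients of weakly correlated unit vectors.**
Let `x_1, …, x_n` be unit vectors in a real Hilbert space with
`|⟨x_i, x_{i'}⟩| ≤ A_1 ρ^{|i - i'|}` for `i ≠ i'`, where `0 < ρ < 1/4` and
`A_1 ρ < 0.1`.  Let `ε_i` be the Gram–Schmidt residuals and write
`x_k = Σ_{i<k} a_{k,i} ε_i + ε_k`.  Then `|a_{k,k'}| ≤ 2 A_1 ρ^{k-k'}` for all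
`k' < k`. -/
theorem gram_schmidt_coefficient_bound
    {H : Type*} [NormedAddCommGroup H] [InnerProductSpace ℝ H] [CompleteSpace H]
    (n : ℕ) (x ε : ℕ → H) (a : ℕ → ℕ → ℝ) (A₁ ρ : ℝ)
    (hρ0 : 0 < ρ) (hρ : ρ < 1 / 4) (hA₁ : 0 < A₁) (hA₁ρ : A₁ * ρ < 0.1)
    (hunit : ∀ i < n, ‖x i‖ = 1)
    (hcorr : ∀ i < n, ∀ i' < n, i ≠ i' →
      |⟪x i, x i'⟫| ≤ A₁ * ρ ^ (Int.natAbs ((i : ℤ) - (i' : ℤ))))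
    (hmem : ∀ i < n, x i - ε i ∈ Submodule.span ℝ (x '' {j | j < i}))
    (horth : ∀ i < n, ∀ y ∈ Submodule.span ℝ (x '' {j | j < i}), ⟪ε i, y⟫ = 0)
    (hexp : ∀ k < n, x k = (∑ i ∈ Finset.range k, a k i • ε i) + ε k) :
    ∀ k < n, ∀ k' < k, |a k k'| ≤ 2 * A₁ * ρ ^ (k - k') :=
  gram_schmidt_coefficient_bound_general n x ε a A₁ ρ hρ0 hρ hA₁ hA₁ρ hunit hcorr hmem horth hexp
end

section
/- Let x_1,…,x_n be unit vectors in a Hilbert space with |⟨x_i,x_{i'}⟩| ≤ A_1 ρ^{|i−i'|} (0 < ρ < 1/4, A_1 ρ < 0.1), and let \hat x_i denote the projection of x_i onto span(x_1,…,x_{i−1}). Then for all i ≥ i', |⟨\hat x_i, \hat x_{i'}⟩| ≤ 4 A_1^2 ρ^{i − i' + 2}/(1 − ρ^2). -/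
/-!
Write `ε k` for the residuals and `x̂ k = x k - ε k`. The residuals are pairwise orthogonal, so
`x̂ k = ∑_{l<k} a_{k,l} ε l` with `a_{k,l} = ⟪x k, ε l⟫ / ‖ε l‖²`. By strong induction on `k`,
`|⟪x i, ε k⟫| ≤ 2 A₁ ρ^(i-k) ‖ε k‖²` for `k < i`: in
`⟪x i, ε k⟫ = ⟪x i, x k⟫ - ∑_{l<k} a_{k,l} ⟪x i, ε l⟫` the sum is dominated by the geometric
tail `4 A₁² ρ^(i-k) ρ²/(1-ρ²)`, and the same estimate at `i = k` bounds `‖ε k‖²` from below.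
Finally `⟪x̂ i, x̂ i'⟫ = ⟪x i, x̂ i'⟫ = ∑_{k<i'} a_{i',k} ⟪x i, ε k⟫` is bounded by that same
geometric tail.
-/

open RealInnerProductSpace

section

open Finset

theorem sum_range_pow_sub_le {r : ℝ} (hr0 : 0 ≤ r) (hr1 : r < 1) (m : ℕ) :
    ∑ l ∈ range m, r ^ (m - l) ≤ r / (1 - r) := by
  have hreflect : ∑ l ∈ range m, r ^ (m - l) = r * ∑ j ∈ range m, r ^ j := by
    rw [← sum_range_reflect, mul_sum]
    refine sum_congr rfl fun j hj => ?_
    rw [← pow_succ']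
    congr 1
    have := mem_range.1 hj
    omega
  calc ∑ l ∈ range m, r ^ (m - l) = r * ∑ j ∈ Ico 0 m, r ^ j := by rw [hreflect, range_eq_Ico]
    _ ≤ r * (r ^ 0 / (1 - r)) := by gcongr; exact geom_sum_Ico_le_of_lt_one hr0 hr1
    _ = r / (1 - r) := by ring

theorem abs_sum_mul_le_of_geometric {ρ C : ℝ} (hρ0 : 0 ≤ ρ) (hρ1 : ρ < 1) (hC : 0 ≤ C)
    {a b : ℕ → ℝ} {k j : ℕ} (hkj : k ≤ j)
    (ha : ∀ l < k, |a l| ≤ C * ρ ^ (k - l)) (hb : ∀ l < k, |b l| ≤ C * ρ ^ (j - l)) :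
    |∑ l ∈ range k, a l * b l| ≤ C ^ 2 * ρ ^ (j - k) * (ρ ^ 2 / (1 - ρ ^ 2)) := by
  calc |∑ l ∈ range k, a l * b l|
      ≤ ∑ l ∈ range k, |a l| * |b l| := (abs_sum_le_sum_abs _ _).trans_eq (by simp only [abs_mul])
    _ ≤ ∑ l ∈ range k, C ^ 2 * ρ ^ (j - k) * (ρ ^ 2) ^ (k - l) := by
        refine sum_le_sum fun l hl => ?_
        have hl := mem_range.1 hl
        have hpow : ρ ^ (k - l) * ρ ^ (j - l) = ρ ^ (j - k) * (ρ ^ 2) ^ (k - l) := by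
          rw [← pow_mul, ← pow_add, ← pow_add]
          congr 1
          omega
        calc |a l| * |b l| ≤ C * ρ ^ (k - l) * (C * ρ ^ (j - l)) :=
              mul_le_mul (ha l hl) (hb l hl) (abs_nonneg _) (by positivity)
          _ = C ^ 2 * ρ ^ (j - k) * (ρ ^ 2) ^ (k - l) := by linear_combination C ^ 2 * hpow
    _ = C ^ 2 * ρ ^ (j - k) * ∑ l ∈ range k, (ρ ^ 2) ^ (k - l) := by rw [mul_sum]
    _ ≤ C ^ 2 * ρ ^ (j - k) * (ρ ^ 2 / (1 - ρ ^ 2)) := by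
        gcongr
        exact sum_range_pow_sub_le (sq_nonneg ρ) (pow_lt_one₀ hρ0 hρ1 two_ne_zero) k

theorem eq_zero_of_mem_span_of_forall_inner_eq_zero {E : Type*} [NormedAddCommGroup E]
    [InnerProductSpace ℝ E] {s : Set E} {v : E} (hv : v ∈ Submodule.span ℝ s)
    (horth : ∀ u ∈ s, ⟪v, u⟫ = 0) : v = 0 := by
  have hortho : Submodule.span ℝ {v} ⟂ Submodule.span ℝ s :=
    Submodule.isOrtho_span.2 fun w hw u hu => by rw [Set.mem_singleton_iff.1 hw]; exact horth u hu
  exact inner_self_eq_zero.1 <|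
    Submodule.isOrtho_iff_inner_eq.1 hortho v (Submodule.mem_span_singleton_self v) v hv

theorem four_mul_mul_geometric_le_one {A ρ : ℝ} (hρ0 : 0 < ρ) (hρ : ρ < 1 / 4) (hA : 0 < A)
    (hAρ : A * ρ < 0.1) : 4 * A * (1 + 2 * A) * (ρ ^ 2 / (1 - ρ ^ 2)) ≤ 1 := by
  have hAρ0 : 0 < A * ρ := mul_pos hA hρ0
  rw [← mul_div_assoc, div_le_one (by nlinarith)]
  nlinarith [mul_lt_mul'' hAρ hρ hAρ0.le hρ0.le, mul_lt_mul'' hAρ hAρ hAρ0.le hAρ0.le]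

variable {H : Type*} [NormedAddCommGroup H] [InnerProductSpace ℝ H]

theorem span_image_setOf_lt_mono {x : ℕ → H} {m m' : ℕ} (h : m ≤ m') :
    Submodule.span ℝ (x '' {j | j < m}) ≤ Submodule.span ℝ (x '' {j | j < m'}) :=
  Submodule.span_mono (Set.image_mono fun _ hj => lt_of_lt_of_le hj h)

structure IsGramSchmidtResidual (n : ℕ) (x ε : ℕ → H) : Prop where
  sub_mem : ∀ i < n, x i - ε i ∈ Submodule.span ℝ (x '' {j | j < i})
  inner_eq_zero : ∀ i < n, ∀ y ∈ Submodule.span ℝ (x '' {j | j < i}), ⟪ε i, y⟫ = 0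

-- The paper's `a_{k,l}`; it is `0` when `ε l = 0`, where the term `a_{k,l} • ε l` vanishes anyway.
noncomputable def gramSchmidtCoeff (x ε : ℕ → H) (k l : ℕ) : ℝ := ⟪x k, ε l⟫ / ‖ε l‖ ^ 2

theorem abs_gramSchmidtCoeff_le {x ε : ℕ → H} {k l : ℕ} {C : ℝ} (hC : 0 ≤ C)
    (hb : |⟪x k, ε l⟫| ≤ C * ‖ε l‖ ^ 2) : |gramSchmidtCoeff x ε k l| ≤ C := by
  rw [gramSchmidtCoeff, abs_div, abs_of_nonneg (sq_nonneg ‖ε l‖)]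
  exact div_le_of_le_mul₀ (sq_nonneg _) hC hb

namespace IsGramSchmidtResidual

variable {n : ℕ} {x ε : ℕ → H}

theorem residual_mem_span (h : IsGramSchmidtResidual n x ε) {l m : ℕ} (hl : l < n) (hlm : l < m) :
    ε l ∈ Submodule.span ℝ (x '' {j | j < m}) := by
  have hx : x l ∈ Submodule.span ℝ (x '' {j | j < m}) := Submodule.subset_span ⟨l, hlm, rfl⟩
  simpa using Submodule.sub_mem _ hx (span_image_setOf_lt_mono hlm.le (h.sub_mem l hl))

theorem inner_residual_residual_eq_zero (h : IsGramSchmidtResidual n x ε) {k l : ℕ} (hk : k < n)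
    (hlk : l < k) : ⟪ε k, ε l⟫ = 0 :=
  h.inner_eq_zero k hk _ (h.residual_mem_span (hlk.trans hk) hlk)

theorem inner_residual_eq_norm_sq (h : IsGramSchmidtResidual n x ε) {i : ℕ} (hi : i < n) :
    ⟪x i, ε i⟫ = ‖ε i‖ ^ 2 := by
  have h0 : ⟪x i - ε i, ε i⟫ = 0 := by
    rw [real_inner_comm]; exact h.inner_eq_zero i hi _ (h.sub_mem i hi)
  rw [inner_sub_left, real_inner_self_eq_norm_sq, sub_eq_zero] at h0
  exact h0

theorem norm_residual_le (h : IsGramSchmidtResidual n x ε) {i : ℕ} (hi : i < n) :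
    ‖ε i‖ ≤ ‖x i‖ := by
  have hcs : ‖ε i‖ ^ 2 ≤ ‖x i‖ * ‖ε i‖ := h.inner_residual_eq_norm_sq hi ▸ real_inner_le_norm _ _
  nlinarith [norm_nonneg (ε i), norm_nonneg (x i)]

theorem abs_inner_residual_le_of_le_mul (h : IsGramSchmidtResidual n x ε) {l : ℕ} {v : H} {C : ℝ}
    (hC : 0 ≤ C) (hl : l < n) (hx : ‖x l‖ = 1) (hb : |⟪v, ε l⟫| ≤ C * ‖ε l‖ ^ 2) :
    |⟪v, ε l⟫| ≤ C :=
  hb.trans (mul_le_of_le_one_right hC (pow_le_one₀ (norm_nonneg _) (hx ▸ h.norm_residual_le hl)))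

theorem span_le_span_residual (h : IsGramSchmidtResidual n x ε) {k : ℕ} (hk : k ≤ n) :
    Submodule.span ℝ (x '' {j | j < k}) ≤ Submodule.span ℝ (ε '' {j | j < k}) := by
  rw [Submodule.span_le]
  rintro _ ⟨j, hj, rfl⟩
  induction j using Nat.strong_induction_on with
  | _ j ih =>
    have hproj : x j - ε j ∈ Submodule.span ℝ (ε '' {l | l < k}) :=
      Submodule.span_le.2 (by rintro _ ⟨l, hl, rfl⟩; exact ih l hl (lt_trans hl hj : l < k))
        (h.sub_mem j (lt_of_lt_of_le hj hk))
    simpa using Submodule.add_mem _ hproj (Submodule.subset_span ⟨j, hj, rfl⟩)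

theorem inner_sum_coeff_smul_residual (h : IsGramSchmidtResidual n x ε) {k l : ℕ} (hk : k < n)
    (hlk : l < k) : ⟪∑ l' ∈ range k, gramSchmidtCoeff x ε k l' • ε l', ε l⟫ = ⟪x k, ε l⟫ := by
  rw [sum_inner, sum_eq_single_of_mem l (mem_range.2 hlk)]
  · rw [real_inner_smul_left, real_inner_self_eq_norm_sq, gramSchmidtCoeff]
    exact div_mul_cancel_of_imp fun hε => by simp_all
  · intro l' hl' hne
    rw [real_inner_smul_left]
    rcases lt_or_gt_of_ne hne with hl'l | hll'
    · rw [real_inner_comm, h.inner_residual_residual_eq_zero (hlk.trans hk) hl'l, mul_zero]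
    · rw [h.inner_residual_residual_eq_zero ((mem_range.1 hl').trans hk) hll', mul_zero]

theorem sub_residual_eq_sum (h : IsGramSchmidtResidual n x ε) {k : ℕ} (hk : k < n) :
    x k - ε k = ∑ l ∈ range k, gramSchmidtCoeff x ε k l • ε l := by
  rw [← sub_eq_zero]
  refine eq_zero_of_mem_span_of_forall_inner_eq_zero (s := ε '' {l | l < k}) ?_ ?_
  · refine h.span_le_span_residual hk.le (Submodule.sub_mem _ (h.sub_mem k hk) ?_)
    exact Submodule.sum_mem _ fun l hl =>
      Submodule.smul_mem _ _ (h.residual_mem_span (mem_range.1 hl |>.trans hk) (mem_range.1 hl))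
  · rintro _ ⟨l, hl, rfl⟩
    rw [inner_sub_left, h.inner_sum_coeff_smul_residual hk hl, inner_sub_left,
      h.inner_residual_residual_eq_zero hk hl, sub_zero, sub_self]

theorem inner_sub_residual_eq_sum (h : IsGramSchmidtResidual n x ε) {k : ℕ} (hk : k < n) (v : H) :
    ⟪v, x k - ε k⟫ = ∑ l ∈ range k, gramSchmidtCoeff x ε k l * ⟪v, ε l⟫ := by
  simp only [h.sub_residual_eq_sum hk, inner_sum, real_inner_smul_right]

theorem inner_sub_residual_sub_residual (h : IsGramSchmidtResidual n x ε) {i i' : ℕ} (hi : i < n)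
    (hi' : i' ≤ i) : ⟪x i - ε i, x i' - ε i'⟫ = ⟪x i, x i' - ε i'⟫ := by
  have hmem := span_image_setOf_lt_mono hi' (h.sub_mem i' (lt_of_le_of_lt hi' hi))
  rw [inner_sub_left, h.inner_eq_zero i hi _ hmem, sub_zero]

theorem abs_inner_residual_le (h : IsGramSchmidtResidual n x ε) {A ρ : ℝ} (hρ0 : 0 ≤ ρ)
    (hρ1 : ρ < 1) (hA : 0 ≤ A) (hsmall : 4 * A * (1 + 2 * A) * (ρ ^ 2 / (1 - ρ ^ 2)) ≤ 1)
    (hunit : ∀ i < n, ‖x i‖ = 1) (hcorr : ∀ i < n, ∀ k < i, |⟪x i, x k⟫| ≤ A * ρ ^ (i - k))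
    {k i : ℕ} (hki : k < i) (hi : i < n) :
    |⟪x i, ε k⟫| ≤ 2 * A * ρ ^ (i - k) * ‖ε k‖ ^ 2 := by
  induction k using Nat.strong_induction_on generalizing i with
  | _ k ih =>
  set q := ρ ^ 2 / (1 - ρ ^ 2)
  have hk : k < n := hki.trans hi
  have hprev : ∀ j, k ≤ j → j < n → ∀ l < k, |⟪x j, ε l⟫| ≤ 2 * A * ρ ^ (j - l) := by
    intro j hkj hj l hl
    exact h.abs_inner_residual_le_of_le_mul (by positivity) (hl.trans hk) (hunit l (hl.trans hk))
      (ih l hl (lt_of_lt_of_le hl hkj) hj)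
  have hcoeff : ∀ l < k, |gramSchmidtCoeff x ε k l| ≤ 2 * A * ρ ^ (k - l) := fun l hl =>
    abs_gramSchmidtCoeff_le (by positivity) (ih l hl hl hk)
  have hproj : ∀ j, k ≤ j → j < n → |⟪x j, x k - ε k⟫| ≤ (2 * A) ^ 2 * ρ ^ (j - k) * q := by
    intro j hkj hj
    rw [h.inner_sub_residual_eq_sum hk]
    exact abs_sum_mul_le_of_geometric hρ0 hρ1 (by positivity) hkj hcoeff (hprev j hkj hj)
  have hnorm : 1 - (2 * A) ^ 2 * q ≤ ‖ε k‖ ^ 2 := by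
    have hself : ⟪x k, x k - ε k⟫ = 1 - ‖ε k‖ ^ 2 := by
      rw [inner_sub_right, h.inner_residual_eq_norm_sq hk, real_inner_self_eq_norm_sq, hunit k hk,
        one_pow]
    have := hproj k le_rfl hk
    rw [hself, Nat.sub_self, pow_zero, mul_one] at this
    linarith [le_abs_self (1 - ‖ε k‖ ^ 2)]
  calc |⟪x i, ε k⟫| = |⟪x i, x k⟫ - ⟪x i, x k - ε k⟫| := by rw [inner_sub_right, sub_sub_cancel]
    _ ≤ A * ρ ^ (i - k) + (2 * A) ^ 2 * ρ ^ (i - k) * q :=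
        (abs_sub _ _).trans (add_le_add (hcorr i hi k hki) (hproj i hki.le hi))
    -- `hsmall` is exactly what makes this step, and so the induction, close
    _ ≤ 2 * A * ρ ^ (i - k) * (1 - (2 * A) ^ 2 * q) := by
        nlinarith [mul_nonneg (mul_nonneg hA (pow_nonneg hρ0 (i - k))) (sub_nonneg.2 hsmall)]
    _ ≤ 2 * A * ρ ^ (i - k) * ‖ε k‖ ^ 2 := by gcongr

end IsGramSchmidtResidual

end

theorem gram_schmidt_projection_inner_bound_general
    {H : Type*} [NormedAddCommGroup H] [InnerProductSpace ℝ H]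
    (n : ℕ) (x ε : ℕ → H) (A₁ ρ : ℝ)
    (hρ0 : 0 < ρ) (hρ : ρ < 1 / 4) (hA₁ : 0 < A₁) (hA₁ρ : A₁ * ρ < 0.1)
    (hunit : ∀ i < n, ‖x i‖ = 1)
    (hcorr : ∀ i < n, ∀ i' < n, i ≠ i' →
      |⟪x i, x i'⟫| ≤ A₁ * ρ ^ (Int.natAbs ((i : ℤ) - (i' : ℤ))))
    (hmem : ∀ i < n, x i - ε i ∈ Submodule.span ℝ (x '' {j | j < i}))
    (horth : ∀ i < n, ∀ y ∈ Submodule.span ℝ (x '' {j | j < i}), ⟪ε i, y⟫ = 0) :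
    ∀ i < n, ∀ i' ≤ i,
      |⟪x i - ε i, x i' - ε i'⟫| ≤ 4 * A₁ ^ 2 * ρ ^ (i - i' + 2) / (1 - ρ ^ 2) := by
  intro i hi i' hi'
  have hgs : IsGramSchmidtResidual n x ε := ⟨hmem, horth⟩
  have hρ1 : ρ < 1 := by linarith
  have hcorr' : ∀ j < n, ∀ k < j, |⟪x j, x k⟫| ≤ A₁ * ρ ^ (j - k) := fun j hj k hk => by
    simpa [show ((j : ℤ) - k).natAbs = j - k by omega] using hcorr j hj k (hk.trans hj) hk.ne'
  have hbound {k j : ℕ} (hkj : k < j) (hj : j < n) :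
      |⟪x j, ε k⟫| ≤ 2 * A₁ * ρ ^ (j - k) * ‖ε k‖ ^ 2 :=
    hgs.abs_inner_residual_le hρ0.le hρ1 hA₁.le (four_mul_mul_geometric_le_one hρ0 hρ hA₁ hA₁ρ)
      hunit hcorr' hkj hj
  have hi'n : i' < n := lt_of_le_of_lt hi' hi
  rw [hgs.inner_sub_residual_sub_residual hi hi', hgs.inner_sub_residual_eq_sum hi'n]
  calc _ ≤ (2 * A₁) ^ 2 * ρ ^ (i - i') * (ρ ^ 2 / (1 - ρ ^ 2)) :=
        abs_sum_mul_le_of_geometric hρ0.le hρ1 (by positivity) hi'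
          (fun k hk => abs_gramSchmidtCoeff_le (by positivity) (hbound hk hi'n))
          (fun k hk => hgs.abs_inner_residual_le_of_le_mul (by positivity) (hk.trans hi'n)
            (hunit k (hk.trans hi'n)) (hbound (lt_of_lt_of_le hk hi') hi))
    _ = 4 * A₁ ^ 2 * ρ ^ (i - i' + 2) / (1 - ρ ^ 2) := by ring

/-- **Inner products of Gram–Schmidt projections of weakly correlated vectors.**
Let `x_1, …, x_n` be unit vectors in a real Hilbert space with
`|⟨x_i, x_{i'}⟩| ≤ A_1 ρ^{|i - i'|}` for `i ≠ i'`, where `0 < ρ < 1/4` and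
`A_1 ρ < 0.1`.  Let `ε_i` be the Gram–Schmidt residuals, so `x̂_i = x_i − ε_i`
is the orthogonal projection of `x_i` onto the span of `x_1, …, x_{i-1}`.
Then for all `i ≥ i'`,
`|⟨x̂_i, x̂_{i'}⟩| ≤ 4 A_1² ρ^{i - i' + 2}/(1 − ρ²)`. -/
theorem gram_schmidt_projection_inner_bound
    {H : Type*} [NormedAddCommGroup H] [InnerProductSpace ℝ H] [CompleteSpace H]
    (n : ℕ) (x ε : ℕ → H) (A₁ ρ : ℝ)
    (hρ0 : 0 < ρ) (hρ : ρ < 1 / 4) (hA₁ : 0 < A₁) (hA₁ρ : A₁ * ρ < 0.1)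
    (hunit : ∀ i < n, ‖x i‖ = 1)
    (hcorr : ∀ i < n, ∀ i' < n, i ≠ i' →
      |⟪x i, x i'⟫| ≤ A₁ * ρ ^ (Int.natAbs ((i : ℤ) - (i' : ℤ))))
    (hmem : ∀ i < n, x i - ε i ∈ Submodule.span ℝ (x '' {j | j < i}))
    (horth : ∀ i < n, ∀ y ∈ Submodule.span ℝ (x '' {j | j < i}), ⟪ε i, y⟫ = 0) :
    ∀ i < n, ∀ i' ≤ i,
      |⟪x i - ε i, x i' - ε i'⟫| ≤ 4 * A₁ ^ 2 * ρ ^ (i - i' + 2) / (1 - ρ ^ 2) :=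
  gram_schmidt_projection_inner_bound_general n x ε A₁ ρ hρ0 hρ hA₁ hA₁ρ hunit hcorr hmem horth
end

section
/- Let Z_1,…,Z_N be i.i.d. standard Gaussian random variables, N = 2^n, S_K = Z_1 + … + Z_K, and for η ∈ (0, 1/2) define C_{n,η} = max over M ∈ [1,N] and K ∈ [0, N−M] of |S_{K+M} − S_K| / (M^{1/2} (N/M)^η). Then E[exp(C_{n,η})] ≤ C(η) for a constant C(η) depending only on η (uniformly in n). -/
/-!
Chaining: an increment `S_{K+M} - S_K` with `M ≤ 2^s` is at most twice the sum over the scales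
`l ≤ s` of the dyadic oscillations, the largest increment of `S` over an aligned block of
length `2^l`. Since `2^l ≲ M`, this gives `C_{n,η} ≤ ∑_l 4·2^{-η(n-l)} D_l`, where `D_l` is the
oscillation at scale `l` divided by `2^{l/2}`, a maximum of `2^{n-l}` absolute values of standard
Gaussians. A union bound at the level `B + √(2(n-l))` gives
`E exp(B D_l) ≤ 3 exp(B² + B √(2(n-l)))`, Jensen's inequality for the weights `2^{-η(n-l)}`
turns the bound on `C_{n,η}` into a bound on `exp C_{n,η}`, and the series
`∑_k 2^{-ηk} exp(B √(2k))` converges.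
-/

open MeasureTheory ProbabilityTheory Real Finset
open scoped NNReal

noncomputable def dyadicOsc (f : ℕ → ℝ) (n l : ℕ) : ℝ :=
  (range (2 ^ (n - l))).sup' (nonempty_range_iff.2 (by positivity))
    fun i ↦ |f ((i + 1) * 2 ^ l) - f (i * 2 ^ l)|

section Chaining

variable (f : ℕ → ℝ) (n : ℕ)

lemma dyadicOsc_nonneg (l : ℕ) : 0 ≤ dyadicOsc f n l :=
  (abs_nonneg _).trans (le_sup' (fun i ↦ |f ((i + 1) * 2 ^ l) - f (i * 2 ^ l)|)
    (mem_range.2 (by positivity)))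

lemma abs_sub_le_dyadicOsc {l i j : ℕ} (hij : i ≤ j) (hji : j ≤ i + 1)
    (hj : j * 2 ^ l ≤ 2 ^ n) : |f (j * 2 ^ l) - f (i * 2 ^ l)| ≤ dyadicOsc f n l := by
  obtain rfl | rfl : j = i ∨ j = i + 1 := by omega
  · simpa using dyadicOsc_nonneg f n l
  · refine le_sup' (fun i ↦ |f ((i + 1) * 2 ^ l) - f (i * 2 ^ l)|) (mem_range.2 ?_)
    have hln : l ≤ n :=
      (Nat.pow_le_pow_iff_right one_lt_two).1 ((Nat.le_mul_of_pos_left _ i.succ_pos).trans hj)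
    rw [← Nat.pow_div hln two_pos]
    exact (Nat.le_div_iff_mul_le (by positivity)).2 hj

lemma abs_sub_div_mul_le_sum_dyadicOsc (s : ℕ) {x : ℕ} (hx : x ≤ 2 ^ n) :
    |f x - f (x / 2 ^ s * 2 ^ s)| ≤ ∑ l ∈ range s, dyadicOsc f n l := by
  induction s with
  | zero => simp
  | succ s ih =>
    have hfloor : x / 2 ^ (s + 1) * 2 ^ (s + 1) = x / 2 ^ s / 2 * 2 * 2 ^ s := by
      rw [pow_succ, ← Nat.div_div_eq_div_mul]; ring
    have hstep : |f (x / 2 ^ s * 2 ^ s) - f (x / 2 ^ s / 2 * 2 * 2 ^ s)| ≤ dyadicOsc f n s :=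
      abs_sub_le_dyadicOsc f n (by omega) (by omega) ((Nat.div_mul_le_self _ _).trans hx)
    rw [sum_range_succ, hfloor]
    exact (abs_sub_le _ _ _).trans (add_le_add ih hstep)

lemma abs_sub_le_two_mul_sum_dyadicOsc {s K M : ℕ} (hM : M ≤ 2 ^ s) (hKM : K + M ≤ 2 ^ n) :
    |f (K + M) - f K| ≤ 2 * ∑ l ∈ range (s + 1), dyadicOsc f n l := by
  have hlo : K / 2 ^ s ≤ (K + M) / 2 ^ s := Nat.div_le_div_right (by omega)
  have hhi : (K + M) / 2 ^ s ≤ K / 2 ^ s + 1 := by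
    rw [← Nat.add_div_right K (by positivity)]
    exact Nat.div_le_div_right (by omega)
  have hright := abs_sub_div_mul_le_sum_dyadicOsc f n s hKM
  have hleft := abs_sub_div_mul_le_sum_dyadicOsc f n s (x := K) (by omega)
  have hmid := abs_sub_le_dyadicOsc f n hlo hhi ((Nat.div_mul_le_self _ _).trans hKM)
  rw [abs_sub_comm] at hleft
  have h₁ := abs_sub_le (f (K + M)) (f ((K + M) / 2 ^ s * 2 ^ s)) (f K)
  have h₂ := abs_sub_le (f ((K + M) / 2 ^ s * 2 ^ s)) (f (K / 2 ^ s * 2 ^ s)) (f K)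
  rw [sum_range_succ]
  linarith [dyadicOsc_nonneg f n s]

end Chaining

lemma exists_two_pow_between {M n : ℕ} (hM : 1 ≤ M) (hMn : M ≤ 2 ^ n) :
    ∃ s ≤ n, M ≤ 2 ^ s ∧ 2 ^ s ≤ 2 * M := by
  refine ⟨Nat.clog 2 M, Nat.clog_le_of_le_pow hMn, Nat.le_pow_clog one_lt_two M, ?_⟩
  rcases hM.eq_or_lt with rfl | hM
  · simp
  · have := Nat.pow_pred_clog_lt_self one_lt_two hM
    have hpos : 0 < Nat.clog 2 M := Nat.clog_pos one_lt_two hM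
    rw [← Nat.succ_pred_eq_of_pos hpos, pow_succ]
    omega

lemma sqrt_two_pow_le {η : ℝ} (hη0 : 0 ≤ η) (hη : η ≤ 1 / 2) {n l : ℕ} {M : ℝ} (hM : 0 < M)
    (hl : (2 : ℝ) ^ l ≤ 2 * M) (hln : l ≤ n) :
    √((2 : ℝ) ^ l) ≤ 2 * ((2 : ℝ) ^ (-η)) ^ (n - l) * (√M * ((2 : ℝ) ^ n / M) ^ η) := by
  set x : ℝ := 2 ^ l with hx
  have hx0 : 0 < x := by positivity
  have hweight : ((2 : ℝ) ^ (-η)) ^ (n - l) * ((2 : ℝ) ^ n) ^ η = x ^ η := by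
    rw [← rpow_natCast, ← rpow_mul zero_le_two, ← rpow_natCast, ← rpow_mul zero_le_two, hx,
      ← rpow_natCast, ← rpow_mul zero_le_two, ← rpow_add two_pos, Nat.cast_sub hln]
    ring_nf
  have hsplit : √x = x ^ η * x ^ (1 / 2 - η) := by
    rw [← rpow_add hx0, sqrt_eq_rpow]; ring_nf
  calc √x = x ^ η * x ^ (1 / 2 - η) := hsplit
    _ ≤ x ^ η * (2 ^ (1 / 2 - η) * M ^ (1 / 2 - η)) := by
      rw [← mul_rpow zero_le_two hM.le]
      gcongr
    _ ≤ x ^ η * (2 * M ^ (1 / 2 - η)) := by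
      gcongr
      calc (2 : ℝ) ^ (1 / 2 - η) ≤ 2 ^ (1 : ℝ) :=
            rpow_le_rpow_of_exponent_le one_le_two (by linarith)
        _ = 2 := rpow_one 2
    _ = 2 * ((2 : ℝ) ^ (-η)) ^ (n - l) * (√M * ((2 : ℝ) ^ n / M) ^ η) := by
      rw [← hweight, div_rpow (by positivity) hM.le, sqrt_eq_rpow, rpow_sub hM]
      field_simp

noncomputable def holderModulus (f : ℕ → ℝ) (n : ℕ) (η : ℝ) : ℝ :=
  sSup {r : ℝ | ∃ M K : ℕ, 1 ≤ M ∧ K + M ≤ 2 ^ n ∧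
    r = |f (K + M) - f K| / (√M * ((2 : ℝ) ^ n / M) ^ η)}

lemma sum_range_succ_reflect {M : Type*} [AddCommMonoid M] (g : ℕ → M) (n : ℕ) :
    ∑ l ∈ range (n + 1), g (n - l) = ∑ k ∈ range (n + 1), g k := by
  simpa using sum_range_reflect g (n + 1)

lemma exp_sum_mul_le {ι : Type*} {s : Finset ι} {w y : ι → ℝ} (hw : ∀ i ∈ s, 0 ≤ w i)
    (hs : 0 < ∑ i ∈ s, w i) :
    exp (∑ i ∈ s, w i * y i) ≤ ∑ i ∈ s, w i / (∑ j ∈ s, w j) * exp ((∑ j ∈ s, w j) * y i) := by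
  have := convexOn_exp.map_sum_le (t := s) (w := fun i ↦ w i / ∑ j ∈ s, w j)
    (p := fun i ↦ (∑ j ∈ s, w j) * y i) (fun i hi ↦ div_nonneg (hw i hi) hs.le)
    (by rw [← sum_div, div_self hs.ne']) fun _ _ ↦ Set.mem_univ _
  have hsum : ∑ i ∈ s, w i * y i = ∑ i ∈ s, w i / (∑ j ∈ s, w j) * ((∑ j ∈ s, w j) * y i) :=
    sum_congr rfl fun i _ ↦ by field_simp
  simpa only [smul_eq_mul, hsum] using this

section HolderModulus

variable (f : ℕ → ℝ) (n : ℕ) {η : ℝ}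

lemma abs_sub_div_le_sum_dyadicOsc (hη0 : 0 ≤ η) (hη : η ≤ 1 / 2) {M K : ℕ} (hM : 1 ≤ M)
    (hKM : K + M ≤ 2 ^ n) :
    |f (K + M) - f K| / (√M * ((2 : ℝ) ^ n / M) ^ η) ≤ ∑ l ∈ range (n + 1),
      ((2 : ℝ) ^ (-η)) ^ (n - l) * (4 * (dyadicOsc f n l / √((2 : ℝ) ^ l))) := by
  obtain ⟨s, hsn, hMs, hsM⟩ := exists_two_pow_between hM (by omega : M ≤ 2 ^ n)
  have hMpos : (0 : ℝ) < M := by exact_mod_cast hM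
  have hden : 0 < √M * ((2 : ℝ) ^ n / M) ^ η := by positivity
  calc |f (K + M) - f K| / (√M * ((2 : ℝ) ^ n / M) ^ η)
      ≤ (2 * ∑ l ∈ range (s + 1), dyadicOsc f n l) / (√M * ((2 : ℝ) ^ n / M) ^ η) := by
        gcongr; exact abs_sub_le_two_mul_sum_dyadicOsc f n hMs hKM
    _ = ∑ l ∈ range (s + 1), 2 * dyadicOsc f n l / (√M * ((2 : ℝ) ^ n / M) ^ η) := by
        rw [mul_sum, sum_div]
    _ ≤ ∑ l ∈ range (s + 1),
          ((2 : ℝ) ^ (-η)) ^ (n - l) * (4 * (dyadicOsc f n l / √((2 : ℝ) ^ l))) := by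
        refine sum_le_sum fun l hl ↦ ?_
        have hls : l ≤ s := Nat.lt_succ_iff.1 (mem_range.1 hl)
        have hl2M : (2 : ℝ) ^ l ≤ 2 * M := by
          exact_mod_cast (Nat.pow_le_pow_right two_pos hls).trans hsM
        have hsqrt := sqrt_two_pow_le hη0 hη hMpos hl2M (hls.trans hsn)
        have hD := div_nonneg (dyadicOsc_nonneg f n l) (sqrt_nonneg ((2 : ℝ) ^ l))
        rw [div_le_iff₀ hden]
        calc 2 * dyadicOsc f n l
            = 2 * (dyadicOsc f n l / √((2 : ℝ) ^ l)) * √((2 : ℝ) ^ l) := by field_simp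
          _ ≤ 2 * (dyadicOsc f n l / √((2 : ℝ) ^ l)) *
                (2 * ((2 : ℝ) ^ (-η)) ^ (n - l) * (√M * ((2 : ℝ) ^ n / M) ^ η)) := by gcongr
          _ = _ := by ring
    _ ≤ _ := sum_le_sum_of_subset_of_nonneg (range_subset_range.2 (by omega))
        fun l _ _ ↦ by have := dyadicOsc_nonneg f n l; positivity

lemma holderModulus_le_sum (hη0 : 0 ≤ η) (hη : η ≤ 1 / 2) :
    holderModulus f n η ≤ ∑ l ∈ range (n + 1),
      ((2 : ℝ) ^ (-η)) ^ (n - l) * (4 * (dyadicOsc f n l / √((2 : ℝ) ^ l))) := by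
  refine Real.sSup_le ?_ (sum_nonneg fun l _ ↦ by have := dyadicOsc_nonneg f n l; positivity)
  rintro _ ⟨M, K, hM, hKM, rfl⟩
  exact abs_sub_div_le_sum_dyadicOsc f n hη0 hη hM hKM

lemma exp_holderModulus_le (hη0 : 0 < η) (hη : η ≤ 1 / 2) :
    exp (holderModulus f n η) ≤ ∑ l ∈ range (n + 1), ((2 : ℝ) ^ (-η)) ^ (n - l) *
      exp (4 / (1 - 2 ^ (-η)) * (dyadicOsc f n l / √((2 : ℝ) ^ l))) := by
  set ρ : ℝ := 2 ^ (-η)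
  have hρ0 : 0 < ρ := by positivity
  have hρ1 : ρ < 1 := rpow_lt_one_of_one_lt_of_neg one_lt_two (by linarith)
  set W := ∑ l ∈ range (n + 1), ρ ^ (n - l) with hWdef
  have hW1 : 1 ≤ W := by
    simpa using single_le_sum (f := fun l ↦ ρ ^ (n - l)) (fun l _ ↦ by positivity)
      (self_mem_range_succ n)
  have hW : 4 * W ≤ 4 / (1 - ρ) := by
    rw [← mul_one_div, hWdef, sum_range_succ_reflect (ρ ^ ·) n, range_eq_Ico]
    gcongr
    simpa using geom_sum_Ico_le_of_lt_one (m := 0) (n := n + 1) hρ0.le hρ1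
  refine (exp_le_exp.2 (holderModulus_le_sum f n hη0.le hη)).trans <|
    (exp_sum_mul_le (fun l _ ↦ by positivity) (by linarith)).trans <| sum_le_sum fun l _ ↦ ?_
  have hD := div_nonneg (dyadicOsc_nonneg f n l) (sqrt_nonneg ((2 : ℝ) ^ l))
  refine mul_le_mul (div_le_self (by positivity) hW1) (exp_le_exp.2 ?_) (by positivity)
    (by positivity)
  nlinarith

end HolderModulus

lemma exp_mul_abs_le_add (t x : ℝ) : exp (t * |x|) ≤ exp (t * x) + exp (-t * x) := by
  rcases abs_cases x with ⟨h, _⟩ | ⟨h, _⟩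
  · rw [h]; exact le_add_of_nonneg_right (exp_pos _).le
  · rw [h, mul_neg, ← neg_mul]; exact le_add_of_nonneg_left (exp_pos _).le

lemma exp_mul_le_exp_mul_add {B a c y : ℝ} (hB : 0 ≤ B) (ha : 0 ≤ a) (hc : 0 < c) :
    exp (B * y) ≤ exp (B * a) + exp (-(a ^ 2 / c)) * exp ((B + a / c) * y) := by
  rcases le_or_gt y a with hya | hay
  · exact (exp_le_exp.2 (by nlinarith)).trans (le_add_of_nonneg_right (by positivity))
  · refine le_add_of_nonneg_of_le (exp_pos _).le ?_
    rw [← exp_add, exp_le_exp, add_mul, div_mul_eq_mul_div]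
    have : a ^ 2 / c ≤ a * y / c := by gcongr; nlinarith
    linarith

lemma exp_mul_sup'_abs_le {ι : Type*} {s : Finset ι} (hs : s.Nonempty) (x : ι → ℝ) {B a c : ℝ}
    (hB : 0 ≤ B) (ha : 0 ≤ a) (hc : 0 < c) :
    exp (B * s.sup' hs fun i ↦ |x i|) ≤
      exp (B * a) + exp (-(a ^ 2 / c)) * ∑ i ∈ s, exp ((B + a / c) * |x i|) := by
  obtain ⟨i, hi, hmax⟩ := exists_mem_eq_sup' hs fun i ↦ |x i|
  rw [hmax]
  refine (exp_mul_le_exp_mul_add hB ha hc).trans (add_le_add le_rfl ?_)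
  gcongr
  exact single_le_sum (f := fun i ↦ exp ((B + a / c) * |x i|)) (fun _ _ ↦ (exp_pos _).le) hi

lemma two_pow_le_exp (k : ℕ) : (2 : ℝ) ^ k ≤ exp k := by
  rw [← exp_one_pow]
  gcongr
  linarith [add_one_le_exp 1]

lemma exp_add_two_mul_two_pow_mul_exp_le {B : ℝ} (hB : 0 ≤ B) (k : ℕ) :
    exp (B ^ 2 + B * √(2 * (k : ℝ))) + 2 * 2 ^ k * exp (B ^ 2 - k) ≤
      3 * exp (B ^ 2 + B * √(2 * (k : ℝ))) := by
  have hk : (2 : ℝ) ^ k * exp (B ^ 2 - k) ≤ exp (B ^ 2 + B * √(2 * (k : ℝ))) :=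
    calc (2 : ℝ) ^ k * exp (B ^ 2 - k) ≤ exp k * exp (B ^ 2 - k) := by
          gcongr; exact two_pow_le_exp k
      _ = exp (B ^ 2) := by rw [← exp_add]; ring_nf
      _ ≤ exp (B ^ 2 + B * √(2 * (k : ℝ))) := by
          gcongr; exact le_add_of_nonneg_right (by positivity)
  linarith

lemma mul_le_half_mul_sq_add_sq_div {ε : ℝ} (hε : 0 < ε) (B t : ℝ) :
    B * t ≤ ε * t ^ 2 / 2 + B ^ 2 / (2 * ε) := by
  have h : ε * t ^ 2 / 2 + B ^ 2 / (2 * ε) - B * t = (ε * t - B) ^ 2 / (2 * ε) := by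
    field_simp; ring
  linarith [show 0 ≤ (ε * t - B) ^ 2 / (2 * ε) by positivity]

variable {Ω : Type*} {mΩ : MeasurableSpace Ω} {μ : Measure Ω}

lemma hasSubgaussianMGF_of_map_eq_gaussianReal [NeZero μ] {X : Ω → ℝ} {v : ℝ≥0}
    (hX : μ.map X = gaussianReal 0 v) : HasSubgaussianMGF X v μ where
  integrable_exp_mul t := mgf_pos_iff.1 (by rw [mgf_gaussianReal hX]; positivity)
  mgf_le t := by rw [mgf_gaussianReal hX, zero_mul, zero_add]

namespace ProbabilityTheory.HasSubgaussianMGF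

variable {X : Ω → ℝ} {c : ℝ≥0}

lemma integrable_exp_mul_abs (h : HasSubgaussianMGF X c μ) (t : ℝ) :
    Integrable (fun ω ↦ exp (t * |X ω|)) μ :=
  ((h.integrable_exp_mul t).add (h.integrable_exp_mul (-t))).mono'
    (by have := h.aemeasurable; fun_prop)
    (ae_of_all _ fun ω ↦ by
      rw [norm_of_nonneg (exp_pos _).le]; exact exp_mul_abs_le_add t (X ω))

lemma integral_exp_mul_abs_le (h : HasSubgaussianMGF X c μ) (t : ℝ) :
    ∫ ω, exp (t * |X ω|) ∂μ ≤ 2 * exp (c * t ^ 2 / 2) :=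
  calc ∫ ω, exp (t * |X ω|) ∂μ ≤ ∫ ω, (exp (t * X ω) + exp (-t * X ω)) ∂μ :=
        integral_mono (h.integrable_exp_mul_abs t)
          ((h.integrable_exp_mul t).add (h.integrable_exp_mul (-t)))
          fun ω ↦ exp_mul_abs_le_add t (X ω)
    _ = mgf X μ t + mgf X μ (-t) := integral_add (h.integrable_exp_mul t) (h.integrable_exp_mul _)
    _ ≤ 2 * exp (c * t ^ 2 / 2) := by
        have := h.mgf_le t; have := h.mgf_le (-t); rw [neg_sq] at this; linarith

end ProbabilityTheory.HasSubgaussianMGF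

section MaxOfSubgaussian

variable {ι : Type*} {s : Finset ι} {X : ι → Ω → ℝ} {c : ℝ≥0} {B a : ℝ}

lemma integrable_exp_mul_sup'_abs [IsFiniteMeasure μ] (hs : s.Nonempty) (hc : 0 < c)
    (hX : ∀ i ∈ s, HasSubgaussianMGF (X i) c μ) (hB : 0 ≤ B) (ha : 0 ≤ a) :
    Integrable (fun ω ↦ exp (B * s.sup' hs fun i ↦ |X i ω|)) μ := by
  have hmeas : AEMeasurable (fun ω ↦ s.sup' hs fun i ↦ |X i ω|) μ := by
    convert sup'_induction hs (fun i ω ↦ |X i ω|) (p := fun g ↦ AEMeasurable g μ)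
      (fun _ h₁ _ h₂ ↦ h₁.sup h₂) fun i hi ↦ (hX i hi).aemeasurable.abs using 1
    ext ω
    rw [Finset.sup'_apply]
  refine ((integrable_const (exp (B * a))).add ((integrable_finsetSum s fun i hi ↦
    (hX i hi).integrable_exp_mul_abs (B + a / c)).const_mul (exp (-(a ^ 2 / c))))).mono'
    (measurable_exp.comp_aemeasurable (hmeas.const_mul B)).aestronglyMeasurable
    (ae_of_all _ fun ω ↦ ?_)
  rw [norm_of_nonneg (exp_pos _).le]
  exact exp_mul_sup'_abs_le hs (X · ω) hB ha (NNReal.coe_pos.2 hc)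

lemma integral_exp_mul_sup'_abs_le [IsProbabilityMeasure μ] (hs : s.Nonempty) (hc : 0 < c)
    (hX : ∀ i ∈ s, HasSubgaussianMGF (X i) c μ) (hB : 0 ≤ B) (ha : 0 ≤ a) :
    ∫ ω, exp (B * s.sup' hs fun i ↦ |X i ω|) ∂μ ≤
      exp (B * a) + 2 * #s * exp (c * B ^ 2 / 2 + B * a - a ^ 2 / (2 * c)) := by
  have hc' : (0 : ℝ) < c := NNReal.coe_pos.2 hc
  have hint : ∀ i ∈ s, Integrable (fun ω ↦ exp ((B + a / c) * |X i ω|)) μ :=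
    fun i hi ↦ (hX i hi).integrable_exp_mul_abs _
  have hexp : exp (-(a ^ 2 / c)) * (2 * exp (c * (B + a / c) ^ 2 / 2)) =
      2 * exp (c * B ^ 2 / 2 + B * a - a ^ 2 / (2 * c)) := by
    rw [mul_left_comm, ← exp_add]; congr 2; field_simp; ring
  calc ∫ ω, exp (B * s.sup' hs fun i ↦ |X i ω|) ∂μ
      ≤ ∫ ω, (exp (B * a) + exp (-(a ^ 2 / c)) * ∑ i ∈ s, exp ((B + a / c) * |X i ω|)) ∂μ :=
        integral_mono (integrable_exp_mul_sup'_abs hs hc hX hB ha)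
          ((integrable_const _).add ((integrable_finsetSum s hint).const_mul _))
          fun ω ↦ exp_mul_sup'_abs_le hs (X · ω) hB ha hc'
    _ = exp (B * a) + exp (-(a ^ 2 / c)) * ∑ i ∈ s, ∫ ω, exp ((B + a / c) * |X i ω|) ∂μ := by
        rw [integral_add (integrable_const _) ((integrable_finsetSum s hint).const_mul _),
          integral_const_mul, integral_finsetSum s hint]
        simp
    _ ≤ exp (B * a) + exp (-(a ^ 2 / c)) * ∑ _i ∈ s, 2 * exp (c * (B + a / c) ^ 2 / 2) := by
        gcongr with i hi
        exact (hX i hi).integral_exp_mul_abs_le _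
    _ = exp (B * a) + 2 * #s * exp (c * B ^ 2 / 2 + B * a - a ^ 2 / (2 * c)) := by
        rw [sum_const, nsmul_eq_mul, mul_left_comm, hexp]; ring

end MaxOfSubgaussian

lemma dyadicOsc_partialSum (x : ℕ → ℝ) (n l : ℕ) :
    dyadicOsc (fun K ↦ ∑ i ∈ range K, x i) n l =
      (range (2 ^ (n - l))).sup' (nonempty_range_iff.2 (by positivity))
        fun j ↦ |∑ i ∈ Ico (j * 2 ^ l) ((j + 1) * 2 ^ l), x i| := by
  unfold dyadicOsc
  congr! 3 with j
  exact (sum_Ico_eq_sub x (Nat.mul_le_mul_right _ j.le_succ)).symm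

variable {Z : ℕ → Ω → ℝ}

lemma hasSubgaussianMGF_sum_Ico {c : ℝ≥0} (hZ : ∀ i, HasSubgaussianMGF (Z i) c μ)
    (hindep : iIndepFun Z μ) (a b : ℕ) :
    HasSubgaussianMGF (fun ω ↦ ∑ i ∈ Ico a b, Z i ω) ((b - a : ℕ) * c) μ := by
  simpa [sum_const, Nat.card_Ico] using
    HasSubgaussianMGF.sum_of_iIndepFun hindep (s := Ico a b) fun i _ ↦ hZ i

lemma integral_exp_mul_dyadicOsc_le [IsProbabilityMeasure μ]
    (hZ : ∀ i, HasSubgaussianMGF (Z i) 1 μ) (hindep : iIndepFun Z μ) (n l : ℕ) {B : ℝ}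
    (hB : 0 ≤ B) :
    Integrable (fun ω ↦ exp (B * (dyadicOsc (fun K ↦ ∑ i ∈ range K, Z i ω) n l / √(2 ^ l)))) μ ∧
    ∫ ω, exp (B * (dyadicOsc (fun K ↦ ∑ i ∈ range K, Z i ω) n l / √(2 ^ l))) ∂μ ≤
      3 * exp (B ^ 2 + B * √(2 * ((n - l : ℕ) : ℝ))) := by
  set σ : ℝ := √(2 ^ l)
  set t : ℝ := √(2 * ((n - l : ℕ) : ℝ))
  have hσ : 0 < σ := by positivity
  have hσ2 : σ ^ 2 = 2 ^ l := sq_sqrt (by positivity)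
  have ht2 : t ^ 2 = 2 * ((n - l : ℕ) : ℝ) := sq_sqrt (by positivity)
  have hblock : ∀ j ∈ range (2 ^ (n - l)),
      HasSubgaussianMGF (fun ω ↦ ∑ i ∈ Ico (j * 2 ^ l) ((j + 1) * 2 ^ l), Z i ω) (2 ^ l) μ := by
    intro j _
    convert hasSubgaussianMGF_sum_Ico hZ hindep (j * 2 ^ l) ((j + 1) * 2 ^ l) using 1
    rw [add_one_mul, Nat.add_sub_cancel_left, mul_one, Nat.cast_pow, Nat.cast_ofNat]
  have hrescale : ∀ ω, B * (dyadicOsc (fun K ↦ ∑ i ∈ range K, Z i ω) n l / σ) =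
      B / σ * (range (2 ^ (n - l))).sup' (nonempty_range_iff.2 (by positivity))
        fun j ↦ |∑ i ∈ Ico (j * 2 ^ l) ((j + 1) * 2 ^ l), Z i ω| := fun ω ↦ by
    rw [dyadicOsc_partialSum]; ring
  simp only [hrescale]
  have hpos : (0 : ℝ≥0) < 2 ^ l := by positivity
  -- threshold `(B + √(2k)) σ` with `k = n - l`: the union bound over the `2^k` blocks then costs
  -- a factor `2^k e^{-k} ≤ 1`
  refine ⟨integrable_exp_mul_sup'_abs _ hpos hblock (by positivity) (a := (B + t) * σ)
    (by positivity), (integral_exp_mul_sup'_abs_le _ hpos hblock (by positivity)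
    (a := (B + t) * σ) (by positivity)).trans ?_⟩
  have hexp₁ : B / σ * ((B + t) * σ) = B ^ 2 + B * t := by field_simp
  have hexp₂ : ((2 ^ l : ℝ≥0) : ℝ) * (B / σ) ^ 2 / 2 + B / σ * ((B + t) * σ) -
      ((B + t) * σ) ^ 2 / (2 * ((2 ^ l : ℝ≥0) : ℝ)) = B ^ 2 - ((n - l : ℕ) : ℝ) := by
    push_cast; rw [← hσ2]; field_simp; linear_combination (-1 : ℝ) * ht2
  rw [hexp₂, hexp₁, card_range]
  push_cast
  exact exp_add_two_mul_two_pow_mul_exp_le hB (n - l)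

lemma integral_exp_holderModulus_le [IsProbabilityMeasure μ]
    (hZ : ∀ i, HasSubgaussianMGF (Z i) 1 μ) (hindep : iIndepFun Z μ) {η : ℝ} (hη0 : 0 < η)
    (hη : η ≤ 1 / 2) (n : ℕ) :
    ∫ ω, exp (holderModulus (fun K ↦ ∑ i ∈ range K, Z i ω) n η) ∂μ ≤
      3 * exp ((4 / (1 - 2 ^ (-η))) ^ 2) * ∑ k ∈ range (n + 1),
        ((2 : ℝ) ^ (-η)) ^ k * exp (4 / (1 - 2 ^ (-η)) * √(2 * (k : ℝ))) := by
  set ρ : ℝ := 2 ^ (-η)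
  set B : ℝ := 4 / (1 - ρ)
  have hB : 0 ≤ B := div_nonneg zero_le_four
    (sub_nonneg.2 (rpow_le_one_of_one_le_of_nonpos one_le_two (by linarith)))
  have hscale l := integral_exp_mul_dyadicOsc_le hZ hindep n l hB
  calc ∫ ω, exp (holderModulus (fun K ↦ ∑ i ∈ range K, Z i ω) n η) ∂μ
      ≤ ∫ ω, ∑ l ∈ range (n + 1), ρ ^ (n - l) *
          exp (B * (dyadicOsc (fun K ↦ ∑ i ∈ range K, Z i ω) n l / √(2 ^ l))) ∂μ :=
        integral_mono_of_nonneg (ae_of_all _ fun _ ↦ (exp_pos _).le)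
          (integrable_finsetSum _ fun l _ ↦ (hscale l).1.const_mul _)
          (ae_of_all _ fun ω ↦ exp_holderModulus_le _ n hη0 hη)
    _ = ∑ l ∈ range (n + 1), ρ ^ (n - l) *
          ∫ ω, exp (B * (dyadicOsc (fun K ↦ ∑ i ∈ range K, Z i ω) n l / √(2 ^ l))) ∂μ := by
        rw [integral_finsetSum _ fun l _ ↦ (hscale l).1.const_mul _]
        simp only [integral_const_mul]
    _ ≤ ∑ l ∈ range (n + 1), ρ ^ (n - l) * (3 * exp (B ^ 2 + B * √(2 * ((n - l : ℕ) : ℝ)))) := by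
        gcongr with l; exact (hscale l).2
    _ = 3 * exp (B ^ 2) * ∑ k ∈ range (n + 1), ρ ^ k * exp (B * √(2 * (k : ℝ))) := by
        rw [sum_range_succ_reflect (fun k ↦ ρ ^ k * (3 * exp (B ^ 2 + B * √(2 * (k : ℝ))))),
          mul_sum]
        refine sum_congr rfl fun k _ ↦ ?_
        rw [exp_add]; ring

lemma exists_forall_sum_range_pow_mul_exp_sqrt_le {ρ : ℝ} (hρ0 : 0 < ρ) (hρ1 : ρ < 1) (B : ℝ) :
    ∃ C, ∀ N, ∑ k ∈ range N, ρ ^ k * exp (B * √(2 * (k : ℝ))) ≤ C := by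
  obtain ⟨ε, hε, hρ⟩ : ∃ ε > 0, ρ = exp (-(2 * ε)) :=
    ⟨-log ρ / 2, by linarith [log_neg hρ0 hρ1],
      by rw [show -(2 * (-log ρ / 2)) = log ρ by ring, exp_log hρ0]⟩
  refine ⟨exp (B ^ 2 / (2 * ε)) * (1 / (1 - exp (-ε))), fun N ↦ ?_⟩
  have hterm (k : ℕ) :
      ρ ^ k * exp (B * √(2 * (k : ℝ))) ≤ exp (B ^ 2 / (2 * ε)) * exp (-ε) ^ k := by
    have hamgm := mul_le_half_mul_sq_add_sq_div hε B √(2 * (k : ℝ))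
    rw [sq_sqrt (by positivity)] at hamgm
    rw [hρ, ← exp_nat_mul, ← exp_nat_mul, ← exp_add, ← exp_add, exp_le_exp]
    linarith
  calc ∑ k ∈ range N, ρ ^ k * exp (B * √(2 * (k : ℝ)))
      ≤ ∑ k ∈ range N, exp (B ^ 2 / (2 * ε)) * exp (-ε) ^ k := sum_le_sum fun k _ ↦ hterm k
    _ ≤ exp (B ^ 2 / (2 * ε)) * (1 / (1 - exp (-ε))) := by
        rw [← mul_sum, range_eq_Ico]
        gcongr
        simpa using geom_sum_Ico_le_of_lt_one (m := 0) (n := N) (exp_pos (-ε)).le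
          (exp_lt_one_iff.2 (by linarith))

/-- **Exponential moments of the discrete Hölder modulus of a Gaussian walk.**
Let `Z_1, …, Z_N` be i.i.d. standard Gaussians, `N = 2^n`, `S_K = Z_1 + ⋯ + Z_K`,
and for `η ∈ (0, 1/2)` let
`C_{n,η} = max {|S_{K+M} − S_K|/(M^{1/2}(N/M)^η) : 1 ≤ M ≤ N, 0 ≤ K ≤ N − M}`.
Then `E[exp(C_{n,η})] ≤ C(η)` for a constant depending only on `η`,
uniformly in `n`. -/
theorem gaussian_walk_holder_modulus_exp_moment (η : ℝ) (hη0 : 0 < η) (hη : η < 1 / 2) :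
    ∃ C : ℝ, ∀ (n : ℕ) (Ω : Type) (_ : MeasurableSpace Ω) (μ : Measure Ω)
      (_ : IsProbabilityMeasure μ) (Z : ℕ → Ω → ℝ),
      (∀ i, Measurable (Z i)) →
      iIndepFun Z μ →
      (∀ i, Measure.map (Z i) μ = gaussianReal 0 1) →
      (∫ ω, Real.exp (sSup {r : ℝ | ∃ M K : ℕ, 1 ≤ M ∧ K + M ≤ 2 ^ n ∧
          r = |(∑ i ∈ Finset.range (K + M), Z i ω) - ∑ i ∈ Finset.range K, Z i ω| /
                (Real.sqrt M * (((2 : ℝ) ^ n) / M) ^ η)}) ∂μ) ≤ C := by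
  obtain ⟨C, hC⟩ := exists_forall_sum_range_pow_mul_exp_sqrt_le (ρ := 2 ^ (-η)) (by positivity)
    (rpow_lt_one_of_one_lt_of_neg one_lt_two (by linarith)) (4 / (1 - 2 ^ (-η)))
  refine ⟨3 * exp ((4 / (1 - 2 ^ (-η))) ^ 2) * C, fun n Ω _ μ _ Z _ hindep hgauss ↦ ?_⟩
  have hZ i : HasSubgaussianMGF (Z i) 1 μ := hasSubgaussianMGF_of_map_eq_gaussianReal (hgauss i)
  calc _ = ∫ ω, exp (holderModulus (fun K ↦ ∑ i ∈ range K, Z i ω) n η) ∂μ := rfl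
    _ ≤ _ := integral_exp_holderModulus_le hZ hindep hη0 hη.le n
    _ ≤ _ := by gcongr; exact hC _
end

section
/- Let B be a standard Brownian motion on [0,1] and, for η ∈ (0, 1/2), define the Hölder constant C_{B,η} = sup over 0 < θ < 1 and 0 ≤ t ≤ 1 − θ of |B_{t+θ} − B_t| / θ^{1/2 − η}. Then E[exp(C_{B,η})] < ∞, with a bound depending only on η. -/
/-!
Chaining: if the largest increment `D_m` of a continuous path `h` between neighbouring points of
`2^{-m} ℤ ∩ [0, 1]` is at most `L 2^{-pm}` for every `m`, comparing `t` and `t + θ` through their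
dyadic approximations at the level `n` with `2^{-n-1} < θ ≤ 2^{-n}` gives
`|h (t + θ) - h t| ≤ c_p L θ^p`. Hence the Hölder constant `C` of `h` satisfies
`exp C ≤ 1 + ∑ₘ (exp (c_p 2^{pm} D_m) - 1)`.

For Brownian motion and `p = 1/2 - η`, `D_m` is a maximum of `2^m` centred Gaussians of variance
`2^{-m}`, so `E exp (β D_m) ≤ 2^{m+1} exp (β² 2^{-m} / 2)`. This union bound alone leaves each
term of the series of size about `2^m`; Jensen's inequality for the power `2^{-ηm} ≤ 1`, applied
with `β = c_p 2^{m/2}`, gives instead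
`E exp (c_p 2^{pm} D_m) ≤ exp (2^{-ηm} ((m + 1) log 2 + c_p² / 2))`, whose excess over `1` is
summable.
-/

open MeasureTheory ProbabilityTheory Filter Real Set
open scoped NNReal ENNReal Topology

structure IsStdBM {Ω : Type*} [MeasurableSpace Ω] (μ : Measure Ω)
    (W : ℝ → Ω → ℝ) : Prop where
  meas : ∀ t, Measurable (W t)
  start : ∀ᵐ ω ∂μ, W 0 ω = 0
  cont : ∀ᵐ ω ∂μ, Continuous fun t => W t ω
  gauss : ∀ s t : ℝ, 0 ≤ s → s ≤ t →
    Measure.map (fun ω => W t ω - W s ω) μ = gaussianReal 0 (t - s).toNNReal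
  indep : ∀ (n : ℕ) (ts : Fin (n + 1) → ℝ), (∀ i, 0 ≤ ts i) → Monotone ts →
    iIndepFun
      (fun i : Fin n => fun ω => W (ts i.succ) ω - W (ts i.castSucc) ω) μ

lemma lintegral_ofReal_exp_mul_abs_gaussianReal_le (v : ℝ≥0) (β : ℝ) :
    ∫⁻ x, ENNReal.ofReal (exp (β * |x|)) ∂gaussianReal 0 v ≤
      ENNReal.ofReal (2 * exp (v * β ^ 2 / 2)) := by
  have hmgf (b : ℝ) : ∫⁻ x, ENNReal.ofReal (exp (b * x)) ∂gaussianReal 0 v =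
      ENNReal.ofReal (exp (v * b ^ 2 / 2)) := by
    rw [← ofReal_integral_eq_lintegral_ofReal (integrable_exp_mul_gaussianReal b)
      (ae_of_all _ fun x => (exp_pos _).le)]
    congr 1
    simpa [mgf] using congrFun (mgf_id_gaussianReal (μ := 0) (v := v)) b
  calc ∫⁻ x, ENNReal.ofReal (exp (β * |x|)) ∂gaussianReal 0 v
      ≤ ∫⁻ x, ENNReal.ofReal (exp (β * x)) + ENNReal.ofReal (exp (-β * x)) ∂gaussianReal 0 v := by
        refine lintegral_mono fun x => ?_
        rw [← ENNReal.ofReal_add (exp_pos _).le (exp_pos _).le]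
        refine ENNReal.ofReal_le_ofReal ?_
        rcases abs_choice x with h | h <;> rw [h]
        · linarith [exp_pos (-β * x)]
        · rw [mul_neg, ← neg_mul]
          linarith [exp_pos (β * x)]
    _ = ENNReal.ofReal (2 * exp (v * β ^ 2 / 2)) := by
        rw [lintegral_add_left (by fun_prop), hmgf, hmgf, neg_sq,
          ← ENNReal.ofReal_add (exp_pos _).le (exp_pos _).le, two_mul]

lemma lintegral_rpow_le_rpow_lintegral {Ω : Type*} [MeasurableSpace Ω] {μ : Measure Ω}
    [IsProbabilityMeasure μ] {f : Ω → ℝ≥0∞} (hf : AEMeasurable f μ) {θ : ℝ} (hθ0 : 0 < θ)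
    (hθ1 : θ ≤ 1) : ∫⁻ ω, f ω ^ θ ∂μ ≤ (∫⁻ ω, f ω ∂μ) ^ θ := by
  have h := eLpNorm'_le_eLpNorm'_of_exponent_le hθ0 hθ1 μ hf.aestronglyMeasurable
  simp only [eLpNorm', enorm_eq_self, ENNReal.rpow_one, div_one] at h
  calc ∫⁻ ω, f ω ^ θ ∂μ = ((∫⁻ ω, f ω ^ θ ∂μ) ^ (1 / θ)) ^ θ := by
        rw [← ENNReal.rpow_mul, one_div_mul_cancel hθ0.ne', ENNReal.rpow_one]
    _ ≤ (∫⁻ ω, f ω ∂μ) ^ θ := by gcongr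

noncomputable def dyadicIncrementMax (h : ℝ → ℝ) (m : ℕ) : ℝ :=
  (Finset.range (2 ^ m)).sup' (Finset.nonempty_range_iff.2 (pow_ne_zero m two_ne_zero))
    fun k => |h ((k + 1) / 2 ^ m) - h (k / 2 ^ m)|

section DyadicIncrementMax

variable (h : ℝ → ℝ) {m : ℕ}

lemma abs_sub_le_dyadicIncrementMax {k : ℕ} (hk : k < 2 ^ m) :
    |h ((k + 1) / 2 ^ m) - h (k / 2 ^ m)| ≤ dyadicIncrementMax h m :=
  Finset.le_sup' (fun k : ℕ => |h ((k + 1) / 2 ^ m) - h (k / 2 ^ m)|) (Finset.mem_range.2 hk)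

lemma dyadicIncrementMax_nonneg (m : ℕ) : 0 ≤ dyadicIncrementMax h m :=
  (abs_nonneg _).trans (abs_sub_le_dyadicIncrementMax h (pow_pos two_pos m))

lemma abs_sub_le_dyadicIncrementMax_of_le_succ {a b : ℕ} (hab : a ≤ b) (hba : b ≤ a + 1)
    (hb : b ≤ 2 ^ m) : |h (b / 2 ^ m) - h (a / 2 ^ m)| ≤ dyadicIncrementMax h m := by
  obtain rfl | rfl : b = a ∨ b = a + 1 := by omega
  · simpa using dyadicIncrementMax_nonneg h m
  · exact_mod_cast abs_sub_le_dyadicIncrementMax h (k := a) (by omega)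

end DyadicIncrementMax

lemma measurable_dyadicIncrementMax {Ω : Type*} [MeasurableSpace Ω] {W : ℝ → Ω → ℝ}
    (hW : ∀ t, Measurable (W t)) (m : ℕ) :
    Measurable fun ω => dyadicIncrementMax (W · ω) m := by
  convert Finset.measurable_sup' (Finset.nonempty_range_iff.2 (pow_ne_zero m two_ne_zero))
    fun k _ => ((hW ((k + 1) / 2 ^ m)).sub (hW (k / 2 ^ m))).abs with ω
  simp only [dyadicIncrementMax, Finset.sup'_apply, Pi.sub_apply]

noncomputable def dyadicFloor (m : ℕ) (x : ℝ) : ℝ := ⌊x * 2 ^ m⌋₊ / 2 ^ m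

section DyadicFloor

variable {x : ℝ} {m : ℕ}

lemma dyadicFloor_nonneg : 0 ≤ dyadicFloor m x := by
  unfold dyadicFloor
  positivity

lemma dyadicFloor_le (hx : 0 ≤ x) : dyadicFloor m x ≤ x := by
  rw [dyadicFloor, div_le_iff₀ (by positivity)]
  exact Nat.floor_le (by positivity)

lemma sub_inv_lt_dyadicFloor : x - (2 ^ m)⁻¹ < dyadicFloor m x := by
  rw [dyadicFloor, lt_div_iff₀ (by positivity), sub_mul, inv_mul_cancel₀ (by positivity)]
  linarith [Nat.lt_floor_add_one (x * 2 ^ m)]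

lemma tendsto_dyadicFloor (hx : 0 ≤ x) :
    Tendsto (fun m => dyadicFloor m x) atTop (𝓝 x) := by
  have h : Tendsto (fun m : ℕ => x - ((2 : ℝ) ^ m)⁻¹) atTop (𝓝 x) := by
    simpa using (tendsto_const_nhds (x := x)).sub (tendsto_inv_atTop_zero.comp
      (tendsto_pow_atTop_atTop_of_one_lt one_lt_two))
  exact tendsto_of_tendsto_of_tendsto_of_le_of_le h tendsto_const_nhds
    (fun m => sub_inv_lt_dyadicFloor.le) (fun m => dyadicFloor_le hx)

lemma tendsto_dyadicFloor_nhdsWithin_Icc (hx : x ∈ Icc 0 1) :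
    Tendsto (fun m => dyadicFloor m x) atTop (𝓝[Icc 0 1] x) :=
  tendsto_nhdsWithin_iff.2 ⟨tendsto_dyadicFloor hx.1,
    Eventually.of_forall fun _ => ⟨dyadicFloor_nonneg, (dyadicFloor_le hx.1).trans hx.2⟩⟩

variable (h : ℝ → ℝ)

lemma abs_sub_dyadicFloor_succ_le (hx : x ∈ Icc 0 1) (m : ℕ) :
    |h (dyadicFloor (m + 1) x) - h (dyadicFloor m x)| ≤ dyadicIncrementMax h (m + 1) := by
  have hx2 : x * 2 ^ (m + 1) = 2 * (x * 2 ^ m) := by ring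
  have hxm : 0 ≤ x * 2 ^ m := mul_nonneg hx.1 (by positivity)
  have hdouble : dyadicFloor m x = ((2 * ⌊x * 2 ^ m⌋₊ : ℕ) : ℝ) / 2 ^ (m + 1) := by
    rw [dyadicFloor, pow_succ]
    push_cast
    field_simp
  rw [hdouble]
  refine abs_sub_le_dyadicIncrementMax_of_le_succ h ?_ ?_ ?_
  · exact Nat.le_floor (by push_cast; rw [hx2]; linarith [Nat.floor_le hxm])
  · refine Nat.lt_succ_iff.1 ((Nat.floor_lt (by linarith)).2 ?_)
    push_cast
    rw [hx2]
    linarith [Nat.lt_floor_add_one (x * 2 ^ m)]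
  · exact Nat.floor_le_of_le (by push_cast; nlinarith [hx.2, pow_pos (two_pos (α := ℝ)) (m + 1)])

lemma abs_sub_dyadicFloor_le_of_sub_le {s t : ℝ} (hs : 0 ≤ s) (hst : s ≤ t) (ht : t ≤ 1)
    {n : ℕ} (hn : t - s ≤ (2 ^ n)⁻¹) :
    |h (dyadicFloor n t) - h (dyadicFloor n s)| ≤ dyadicIncrementMax h n := by
  have h2n : (0 : ℝ) < 2 ^ n := by positivity
  refine abs_sub_le_dyadicIncrementMax_of_le_succ h (Nat.floor_mono (by gcongr)) ?_
    (Nat.floor_le_of_le (by push_cast; nlinarith))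
  rw [← Nat.floor_add_one (by positivity)]
  refine Nat.floor_mono ?_
  have := mul_le_mul_of_nonneg_right hn h2n.le
  rw [inv_mul_cancel₀ h2n.ne'] at this
  linarith

end DyadicFloor

section Chaining

variable {h : ℝ → ℝ}

lemma abs_sub_dyadicFloor_le (hh : ContinuousOn h (Icc 0 1)) {L r : ℝ} (hr : r < 1)
    (hL : ∀ m, dyadicIncrementMax h m ≤ L * r ^ m) {x : ℝ} (hx : x ∈ Icc 0 1) (n : ℕ) :
    |h (dyadicFloor n x) - h x| ≤ L * r * r ^ n / (1 - r) := by
  have hstep (m : ℕ) : dist (h (dyadicFloor m x)) (h (dyadicFloor (m + 1) x)) ≤ L * r * r ^ m := by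
    rw [dist_comm, Real.dist_eq, mul_assoc, ← pow_succ']
    exact (abs_sub_dyadicFloor_succ_le h hx m).trans (hL _)
  exact dist_le_of_le_geometric_of_tendsto r (L * r) hr hstep
    ((hh x hx).tendsto.comp (tendsto_dyadicFloor_nhdsWithin_Icc hx)) n

-- `2 ^ p` pays for the middle step at level `n`, `2 / (1 - 2 ^ (-p))` for the two geometric tails.
noncomputable def dyadicChainingConst (p : ℝ) : ℝ := 2 ^ p + 2 / (1 - 2 ^ (-p))

lemma two_rpow_neg_lt_one {p : ℝ} (hp : 0 < p) : (2 : ℝ) ^ (-p) < 1 :=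
  rpow_lt_one_of_one_lt_of_neg one_lt_two (neg_neg_of_pos hp)

lemma dyadicChainingConst_pos {p : ℝ} (hp : 0 < p) : 0 < dyadicChainingConst p := by
  have : 0 < 1 - (2 : ℝ) ^ (-p) := sub_pos.2 (two_rpow_neg_lt_one hp)
  unfold dyadicChainingConst
  positivity

lemma abs_sub_le_of_dyadicIncrementMax_le {p : ℝ} (hp : 0 < p) (hh : ContinuousOn h (Icc 0 1))
    {L : ℝ} (hL : ∀ m, dyadicIncrementMax h m ≤ L * ((2 : ℝ) ^ (-p)) ^ m) {s t : ℝ}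
    (hs : 0 ≤ s) (hst : s < t) (ht : t ≤ 1) :
    |h t - h s| ≤ dyadicChainingConst p * L * (t - s) ^ p := by
  set r : ℝ := 2 ^ (-p) with hr
  have hr1 : r < 1 := two_rpow_neg_lt_one hp
  have hL0 : 0 ≤ L := by simpa using (dyadicIncrementMax_nonneg h 0).trans (hL 0)
  obtain ⟨n, hn, hn'⟩ :=
    exists_nat_pow_near ((one_le_inv₀ (sub_pos.2 hst)).2 (by linarith)) one_lt_two
  have hmid : |h (dyadicFloor n t) - h (dyadicFloor n s)| ≤ L * r ^ n :=
    (abs_sub_dyadicFloor_le_of_sub_le h hs hst.le ht ((le_inv_comm₀ (by positivity)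
      (sub_pos.2 hst)).1 hn)).trans (hL n)
  have hs_tail := abs_sub_dyadicFloor_le hh hr1 hL ⟨hs, by linarith⟩ n
  have ht_tail := abs_sub_dyadicFloor_le hh hr1 hL ⟨by linarith, ht⟩ n
  have hrθ : r ^ (n + 1) ≤ (t - s) ^ p := calc
    r ^ (n + 1) = ((2 : ℝ) ^ (n + 1))⁻¹ ^ p := by
      rw [hr, inv_rpow (by positivity), ← rpow_neg (by positivity), ← rpow_natCast,
        ← rpow_natCast 2, ← rpow_mul zero_le_two, ← rpow_mul zero_le_two, mul_comm]
    _ ≤ (t - s) ^ p :=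
      rpow_le_rpow (by positivity) ((inv_le_comm₀ (by positivity) (sub_pos.2 hst)).2 hn'.le) hp.le
  have hrn : r ^ n = 2 ^ p * r ^ (n + 1) := by
    rw [pow_succ, ← mul_assoc, mul_comm _ (r ^ n), mul_assoc, hr, ← rpow_add two_pos,
      add_neg_cancel, rpow_zero, mul_one]
  calc |h t - h s|
      ≤ |h (dyadicFloor n t) - h t| + |h (dyadicFloor n t) - h (dyadicFloor n s)|
          + |h (dyadicFloor n s) - h s| := by
        have := abs_sub_le (h t) (h (dyadicFloor n t)) (h s)
        have := abs_sub_le (h (dyadicFloor n t)) (h (dyadicFloor n s)) (h s)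
        have := abs_sub_comm (h t) (h (dyadicFloor n t))
        linarith
    _ ≤ L * r * r ^ n / (1 - r) + L * r ^ n + L * r * r ^ n / (1 - r) := by gcongr
    _ = dyadicChainingConst p * L * r ^ (n + 1) := by
        rw [mul_assoc L r, ← pow_succ', hrn, dyadicChainingConst, ← hr]
        ring
    _ ≤ dyadicChainingConst p * L * (t - s) ^ p := by
        have := dyadicChainingConst_pos hp
        gcongr

end Chaining

noncomputable def holderConstant (h : ℝ → ℝ) (p : ℝ) : ℝ :=
  sSup {x | ∃ θ t : ℝ, 0 < θ ∧ θ < 1 ∧ 0 ≤ t ∧ t ≤ 1 - θ ∧ x = |h (t + θ) - h t| / θ ^ p}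

section HolderConstant

variable {h : ℝ → ℝ} {p : ℝ}

lemma holderConstant_le_of_dyadicIncrementMax_le (hp : 0 < p) (hh : ContinuousOn h (Icc 0 1))
    {L : ℝ} (hL : ∀ m, dyadicIncrementMax h m ≤ L * ((2 : ℝ) ^ (-p)) ^ m) :
    holderConstant h p ≤ dyadicChainingConst p * L := by
  have hL0 : 0 ≤ L := by simpa using (dyadicIncrementMax_nonneg h 0).trans (hL 0)
  refine Real.sSup_le ?_ (mul_nonneg (dyadicChainingConst_pos hp).le hL0)
  rintro _ ⟨θ, t, hθ, -, ht0, ht1, rfl⟩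
  rw [div_le_iff₀ (rpow_pos_of_pos hθ p)]
  simpa using abs_sub_le_of_dyadicIncrementMax_le hp hh hL ht0 (lt_add_of_pos_right t hθ)
    (by linarith)

lemma ofReal_exp_holderConstant_le (hp : 0 < p) (hh : ContinuousOn h (Icc 0 1)) :
    ENNReal.ofReal (exp (holderConstant h p)) ≤ 1 + ∑' m : ℕ, ENNReal.ofReal
      (exp (dyadicChainingConst p * (dyadicIncrementMax h m * (2 ^ p) ^ m)) - 1) := by
  set c := dyadicChainingConst p
  set T := ∑' m : ℕ,
    ENNReal.ofReal (exp (c * (dyadicIncrementMax h m * (2 ^ p) ^ m)) - 1)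
  rcases eq_or_ne T ∞ with hT_top | hT_top
  · simp [hT_top]
  have hc := dyadicChainingConst_pos hp
  have hlog : 0 < 1 + T.toReal := by positivity
  -- Every term of `T` is at most `T`, so `L = log (1 + T) / c` is a chaining bound for `h`,
  -- and the resulting `exp (c * L)` is exactly `1 + T`.
  have hL (m : ℕ) : dyadicIncrementMax h m ≤ log (1 + T.toReal) / c * ((2 : ℝ) ^ (-p)) ^ m := by
    have hterm := (ENNReal.ofReal_le_iff_le_toReal hT_top).1 (ENNReal.le_tsum m)
    have hexp : c * (dyadicIncrementMax h m * (2 ^ p) ^ m) ≤ log (1 + T.toReal) :=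
      (le_log_iff_exp_le hlog).2 (by linarith)
    rw [rpow_neg zero_le_two, inv_pow, ← div_eq_mul_inv, div_div, le_div_iff₀ (by positivity)]
    linarith
  calc ENNReal.ofReal (exp (holderConstant h p))
      ≤ ENNReal.ofReal (exp (c * (log (1 + T.toReal) / c))) := by
        gcongr
        exact holderConstant_le_of_dyadicIncrementMax_le hp hh hL
    _ = 1 + T := by
        rw [mul_div_cancel₀ _ hc.ne', exp_log hlog, ENNReal.ofReal_add zero_le_one
          ENNReal.toReal_nonneg, ENNReal.ofReal_one, ENNReal.ofReal_toReal hT_top]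

end HolderConstant

section Moments

variable {Ω : Type*} [MeasurableSpace Ω] {μ : Measure Ω}

lemma lintegral_ofReal_exp_mul_le [IsProbabilityMeasure μ] {X : Ω → ℝ} (hX : Measurable X)
    {θ : ℝ} (hθ0 : 0 < θ) (hθ1 : θ ≤ 1) {y : ℝ}
    (h : ∫⁻ ω, ENNReal.ofReal (exp (X ω)) ∂μ ≤ ENNReal.ofReal (exp y)) :
    ∫⁻ ω, ENNReal.ofReal (exp (θ * X ω)) ∂μ ≤ ENNReal.ofReal (exp (θ * y)) := by
  have hpow (z : ℝ) : ENNReal.ofReal (exp (θ * z)) = ENNReal.ofReal (exp z) ^ θ := by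
    rw [mul_comm, exp_mul, ENNReal.ofReal_rpow_of_nonneg (exp_pos z).le hθ0.le]
  simp only [hpow]
  exact (lintegral_rpow_le_rpow_lintegral (by fun_prop) hθ0 hθ1).trans
    (ENNReal.rpow_le_rpow h hθ0.le)

lemma lintegral_ofReal_sub_one_le [IsProbabilityMeasure μ] {Y : Ω → ℝ} {a : ℝ}
    (h : ∫⁻ ω, ENNReal.ofReal (Y ω) ∂μ ≤ ENNReal.ofReal a) (hY : ∀ ω, 1 ≤ Y ω) :
    ∫⁻ ω, ENNReal.ofReal (Y ω - 1) ∂μ ≤ ENNReal.ofReal (a - 1) := by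
  have hadd : ∫⁻ ω, ENNReal.ofReal (Y ω - 1) ∂μ + 1 = ∫⁻ ω, ENNReal.ofReal (Y ω) ∂μ := calc
    _ = ∫⁻ ω, (ENNReal.ofReal (Y ω - 1) + 1) ∂μ := by
      rw [lintegral_add_right _ measurable_const, lintegral_const, measure_univ, one_mul]
    _ = ∫⁻ ω, ENNReal.ofReal (Y ω) ∂μ := lintegral_congr fun ω => by
      rw [← ENNReal.ofReal_one, ← ENNReal.ofReal_add (by linarith [hY ω]) zero_le_one,
        sub_add_cancel]
  rw [ENNReal.ofReal_sub _ zero_le_one, ENNReal.ofReal_one]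
  exact ENNReal.le_sub_of_add_le_right ENNReal.one_ne_top (hadd ▸ h)

variable {W : ℝ → Ω → ℝ}

lemma lintegral_ofReal_exp_mul_abs_sub_le (hmeas : ∀ t, Measurable (W t))
    (hgauss : ∀ s t : ℝ, 0 ≤ s → s ≤ t →
      μ.map (fun ω => W t ω - W s ω) = gaussianReal 0 (t - s).toNNReal)
    {s t : ℝ} (hs : 0 ≤ s) (hst : s ≤ t) (β : ℝ) :
    ∫⁻ ω, ENNReal.ofReal (exp (β * |W t ω - W s ω|)) ∂μ ≤
      ENNReal.ofReal (2 * exp ((t - s) * β ^ 2 / 2)) := by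
  rw [← lintegral_map (f := fun x => ENNReal.ofReal (exp (β * |x|)))
    (g := fun ω => W t ω - W s ω) (by fun_prop) ((hmeas t).sub (hmeas s)), hgauss s t hs hst]
  refine (lintegral_ofReal_exp_mul_abs_gaussianReal_le _ β).trans_eq ?_
  rw [Real.coe_toNNReal _ (sub_nonneg.2 hst)]

lemma lintegral_ofReal_exp_mul_dyadicIncrementMax_le (hmeas : ∀ t, Measurable (W t))
    (hgauss : ∀ s t : ℝ, 0 ≤ s → s ≤ t →
      μ.map (fun ω => W t ω - W s ω) = gaussianReal 0 (t - s).toNNReal)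
    (m : ℕ) (β : ℝ) :
    ∫⁻ ω, ENNReal.ofReal (exp (β * dyadicIncrementMax (W · ω) m)) ∂μ ≤
      ENNReal.ofReal (exp ((m + 1) * log 2 + β ^ 2 / 2 ^ m / 2)) := by
  set X : ℕ → Ω → ℝ := fun k ω => W ((k + 1) / 2 ^ m) ω - W (k / 2 ^ m) ω
  have hmax (ω : Ω) : ENNReal.ofReal (exp (β * dyadicIncrementMax (W · ω) m)) ≤
      ∑ k ∈ Finset.range (2 ^ m), ENNReal.ofReal (exp (β * |X k ω|)) := by
    obtain ⟨k, hk, hk_max⟩ := Finset.exists_mem_eq_sup' (Finset.nonempty_range_iff.2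
      (pow_ne_zero m two_ne_zero)) fun k : ℕ => |X k ω|
    rw [dyadicIncrementMax, hk_max]
    exact Finset.single_le_sum (f := fun k => ENNReal.ofReal (exp (β * |X k ω|)))
      (fun _ _ => by positivity) hk
  have hincr (k : ℕ) : ∫⁻ ω, ENNReal.ofReal (exp (β * |X k ω|)) ∂μ ≤
      ENNReal.ofReal (2 * exp (β ^ 2 / 2 ^ m / 2)) := by
    refine (lintegral_ofReal_exp_mul_abs_sub_le hmeas hgauss (by positivity)
      (by gcongr; linarith) β).trans_eq ?_
    congr 3
    field_simp
    ring
  calc ∫⁻ ω, ENNReal.ofReal (exp (β * dyadicIncrementMax (W · ω) m)) ∂μ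
      ≤ ∫⁻ ω, ∑ k ∈ Finset.range (2 ^ m), ENNReal.ofReal (exp (β * |X k ω|)) ∂μ :=
        lintegral_mono hmax
    _ = ∑ k ∈ Finset.range (2 ^ m), ∫⁻ ω, ENNReal.ofReal (exp (β * |X k ω|)) ∂μ :=
        lintegral_finsetSum _ fun k _ => by fun_prop
    _ ≤ ∑ k ∈ Finset.range (2 ^ m), ENNReal.ofReal (2 * exp (β ^ 2 / 2 ^ m / 2)) :=
        Finset.sum_le_sum fun k _ => hincr k
    _ = ENNReal.ofReal (exp ((m + 1) * log 2 + β ^ 2 / 2 ^ m / 2)) := by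
        have hpow : exp ((m + 1) * log 2) = 2 ^ (m + 1) := by
          rw [← exp_log (pow_pos two_pos (m + 1)), log_pow]
          push_cast
          rfl
        rw [Finset.sum_const, Finset.card_range, nsmul_eq_mul, ← ENNReal.ofReal_natCast,
          ← ENNReal.ofReal_mul (by positivity), exp_add, hpow, pow_succ]
        push_cast
        ring_nf

lemma lintegral_ofReal_exp_mul_scaled_dyadicIncrementMax_le [IsProbabilityMeasure μ]
    (hmeas : ∀ t, Measurable (W t))
    (hgauss : ∀ s t : ℝ, 0 ≤ s → s ≤ t →
      μ.map (fun ω => W t ω - W s ω) = gaussianReal 0 (t - s).toNNReal)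
    {η : ℝ} (hη : 0 ≤ η) (c : ℝ) (m : ℕ) :
    ∫⁻ ω, ENNReal.ofReal (exp (c * (dyadicIncrementMax (W · ω) m * (2 ^ (1 / 2 - η)) ^ m))) ∂μ ≤
      ENNReal.ofReal (exp ((2 ^ (-η)) ^ m * ((m + 1) * log 2 + c ^ 2 / 2))) := by
  have hθ0 : 0 < ((2 : ℝ) ^ (-η)) ^ m := by positivity
  have hθ1 : ((2 : ℝ) ^ (-η)) ^ m ≤ 1 :=
    pow_le_one₀ (by positivity) (rpow_le_one_of_one_le_of_nonpos one_le_two (by linarith))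
  have hsplit : (2 : ℝ) ^ (1 / 2 - η) = 2 ^ (-η) * √2 := by
    rw [sqrt_eq_rpow, ← rpow_add two_pos]
    ring_nf
  have hβ : (c * √2 ^ m) ^ 2 / 2 ^ m / 2 = c ^ 2 / 2 := by
    rw [mul_pow, ← pow_mul, mul_comm m, pow_mul, sq_sqrt zero_le_two]
    field_simp
  have hscale (ω : Ω) : c * (dyadicIncrementMax (W · ω) m * (2 ^ (1 / 2 - η)) ^ m) =
      (2 ^ (-η)) ^ m * (c * √2 ^ m * dyadicIncrementMax (W · ω) m) := by
    rw [hsplit, mul_pow]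
    ring
  simp only [hscale]
  refine lintegral_ofReal_exp_mul_le ((measurable_dyadicIncrementMax hmeas m).const_mul _)
    hθ0 hθ1 ?_
  simpa only [hβ] using lintegral_ofReal_exp_mul_dyadicIncrementMax_le hmeas hgauss m (c * √2 ^ m)

end Moments

lemma summable_exp_sub_one {ι : Type*} {x : ι → ℝ} (hx : Summable x) :
    Summable fun i => exp (x i) - 1 := by
  refine .of_norm_bounded_eventually (hx.abs.mul_left 2) ?_
  filter_upwards [Metric.tendsto_nhds.1 hx.tendsto_cofinite_zero 1 one_pos] with i hi
  rw [Real.dist_0_eq_abs] at hi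
  exact abs_exp_sub_one_le hi.le

lemma summable_geometric_mul_affine {q : ℝ} (hq0 : 0 ≤ q) (hq1 : q < 1) (a b : ℝ) :
    Summable fun m : ℕ => q ^ m * ((m + 1) * a + b) := by
  have h1 := summable_pow_mul_geometric_of_norm_lt_one 1 (by rwa [norm_of_nonneg hq0])
  have h0 := summable_geometric_of_lt_one hq0 hq1
  refine ((h1.mul_left a).add (h0.mul_left (a + b))).congr fun m => ?_
  simp only [pow_one]
  ring

noncomputable def holderLevelExponent (η : ℝ) (m : ℕ) : ℝ :=
  (2 ^ (-η)) ^ m * ((m + 1) * log 2 + dyadicChainingConst (1 / 2 - η) ^ 2 / 2)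

lemma holderLevelExponent_nonneg (η : ℝ) (m : ℕ) : 0 ≤ holderLevelExponent η m := by
  unfold holderLevelExponent
  positivity

lemma summable_exp_holderLevelExponent_sub_one {η : ℝ} (hη : 0 < η) :
    Summable fun m => exp (holderLevelExponent η m) - 1 :=
  summable_exp_sub_one (summable_geometric_mul_affine (by positivity) (two_rpow_neg_lt_one hη) _ _)

lemma lintegral_ofReal_exp_holderConstant_le {Ω : Type*} [MeasurableSpace Ω] {μ : Measure Ω}
    [IsProbabilityMeasure μ] {W : ℝ → Ω → ℝ} (hmeas : ∀ t, Measurable (W t))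
    (hgauss : ∀ s t : ℝ, 0 ≤ s → s ≤ t →
      μ.map (fun ω => W t ω - W s ω) = gaussianReal 0 (t - s).toNNReal)
    (hcont : ∀ᵐ ω ∂μ, ContinuousOn (W · ω) (Icc 0 1)) {η : ℝ} (hη0 : 0 < η) (hη : η < 1 / 2) :
    ∫⁻ ω, ENNReal.ofReal (exp (holderConstant (W · ω) (1 / 2 - η))) ∂μ ≤
      ENNReal.ofReal (1 + ∑' m, (exp (holderLevelExponent η m) - 1)) := by
  set c := dyadicChainingConst (1 / 2 - η)
  have hp : 0 < 1 / 2 - η := by linarith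
  set Y : ℕ → Ω → ℝ :=
    fun m ω => exp (c * (dyadicIncrementMax (W · ω) m * (2 ^ (1 / 2 - η)) ^ m)) - 1
  have hY (m : ℕ) : Measurable (Y m) := by
    have := measurable_dyadicIncrementMax hmeas m
    fun_prop
  have hlevel (m : ℕ) : ∫⁻ ω, ENNReal.ofReal (Y m ω) ∂μ ≤
      ENNReal.ofReal (exp (holderLevelExponent η m) - 1) :=
    lintegral_ofReal_sub_one_le
      (lintegral_ofReal_exp_mul_scaled_dyadicIncrementMax_le hmeas hgauss hη0.le c m)
      fun ω => one_le_exp (mul_nonneg (dyadicChainingConst_pos hp).le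
        (mul_nonneg (dyadicIncrementMax_nonneg _ m) (by positivity)))
  calc ∫⁻ ω, ENNReal.ofReal (exp (holderConstant (W · ω) (1 / 2 - η))) ∂μ
      ≤ ∫⁻ ω, 1 + ∑' m, ENNReal.ofReal (Y m ω) ∂μ :=
        lintegral_mono_ae (hcont.mono fun ω hω => ofReal_exp_holderConstant_le hp hω)
    _ = 1 + ∑' m, ∫⁻ ω, ENNReal.ofReal (Y m ω) ∂μ := by
        rw [lintegral_add_left measurable_const, lintegral_const, measure_univ, mul_one,
          lintegral_tsum fun m => (hY m).ennreal_ofReal.aemeasurable]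
    _ ≤ 1 + ∑' m, ENNReal.ofReal (exp (holderLevelExponent η m) - 1) :=
        add_le_add_right (ENNReal.tsum_le_tsum hlevel) 1
    _ = ENNReal.ofReal (1 + ∑' m, (exp (holderLevelExponent η m) - 1)) := by
        have hnonneg (m : ℕ) : 0 ≤ exp (holderLevelExponent η m) - 1 :=
          sub_nonneg.2 (one_le_exp (holderLevelExponent_nonneg η m))
        rw [ENNReal.ofReal_add zero_le_one (tsum_nonneg hnonneg), ENNReal.ofReal_one,
          ENNReal.ofReal_tsum_of_nonneg hnonneg (summable_exp_holderLevelExponent_sub_one hη0)]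

lemma integral_le_of_lintegral_ofReal_le {Ω : Type*} [MeasurableSpace Ω] {μ : Measure Ω}
    {f : Ω → ℝ} (hf : 0 ≤ᵐ[μ] f) {C : ℝ} (hC : 0 ≤ C)
    (h : ∫⁻ ω, ENNReal.ofReal (f ω) ∂μ ≤ ENNReal.ofReal C) : ∫ ω, f ω ∂μ ≤ C := by
  by_cases hfm : AEStronglyMeasurable f μ
  · rw [integral_eq_lintegral_of_nonneg_ae hf hfm]
    exact ENNReal.toReal_le_of_le_ofReal hC h
  · rw [integral_non_aestronglyMeasurable hfm]
    exact hC

/-- **Exponential moments of the Brownian Hölder constant.**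
For `η ∈ (0, 1/2)`, let
`C_{B,η}(ω) = sup {|B_{t+θ}(ω) − B_t(ω)|/θ^{1/2−η} : 0 < θ < 1, 0 ≤ t ≤ 1−θ}`.
Then `E[exp(C_{B,η})]` is finite, with a bound depending only on `η`. -/
theorem brownian_holder_constant_exp_moment (η : ℝ) (hη0 : 0 < η) (hη : η < 1 / 2) :
    ∃ C : ℝ, ∀ (Ω : Type) (_ : MeasurableSpace Ω) (μ : Measure Ω)
      (_ : IsProbabilityMeasure μ) (W : ℝ → Ω → ℝ), IsStdBM μ W →
      (∫ ω, Real.exp (sSup {r : ℝ | ∃ θ t : ℝ, 0 < θ ∧ θ < 1 ∧ 0 ≤ t ∧ t ≤ 1 - θ ∧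
          r = |W (t + θ) ω - W t ω| / θ ^ ((1 : ℝ) / 2 - η)}) ∂μ) ≤ C := by
  have hC : 0 ≤ 1 + ∑' m, (exp (holderLevelExponent η m) - 1) :=
    add_nonneg zero_le_one (tsum_nonneg fun m =>
      sub_nonneg.2 (one_le_exp (holderLevelExponent_nonneg η m)))
  refine ⟨_, fun Ω _ μ _ W hW => integral_le_of_lintegral_ofReal_le
    (ae_of_all _ fun ω => (exp_pos _).le) hC ?_⟩
  exact lintegral_ofReal_exp_holderConstant_le hW.meas hW.gauss
    (hW.cont.mono fun ω hω => hω.continuousOn) hη0 hη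
end

section
/- With the self-similar partition scheme: let δ satisfy (2+δ)^m = 1/δ, and recursively partition an interval of length (2+δ)^ℓ into pieces of lengths (2+δ)^{ℓ−1}, (2+δ)^{ℓ−m−1}, (2+δ)^{ℓ−1}, continuing to partition every piece of length greater than (2+δ)^{ℓ−d}. Then the total number of resulting pieces is at most (2+δ)^{d+m}. -/
/-!
Give a piece of depth `k` the mass `x ^ k` with `x = (2+δ)⁻¹`. Since `x ^ m = δ`, the relation
`δ (2+δ)^m = 1` says `x + x ^ (m+1) + x = 1`, so splitting a piece preserves mass and the final
pieces have total mass `1`. Every final piece has depth at most `d + m`, hence mass at least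
`x ^ (d+m)`, and there are at most `x ^ -(d+m) = (2+δ)^(d+m)` of them.
-/

/-- The multiset of depths of the pieces produced by the self-similar partition
scheme: a piece of depth `j` (of length `(2+δ)^{ℓ-j}`) is split into pieces of
depths `j+1`, `j+m+1`, `j+1` as long as `j < d`, and is kept once `j ≥ d`. -/
def finalPieces (m d j : ℕ) : Multiset ℕ :=
  if h : j < d then
    finalPieces m d (j + 1) + finalPieces m d (j + m + 1) + finalPieces m d (j + 1)
  else {j}
termination_by d - j
decreasing_by all_goals omega

theorem le_of_mem_finalPieces {m d j k : ℕ} (hj : j ≤ d + m) (hk : k ∈ finalPieces m d j) :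
    k ≤ d + m := by
  induction j using finalPieces.induct (m := m) (d := d) with
  | case1 j h ih_short ih_long =>
    rw [finalPieces, dif_pos h] at hk
    simp only [Multiset.mem_add] at hk
    rcases hk with (hk | hk) | hk
    · exact ih_short (by omega) hk
    · exact ih_long (by omega) hk
    · exact ih_short (by omega) hk
  | case2 j h =>
    rw [finalPieces, dif_neg h, Multiset.mem_singleton] at hk
    omega

theorem sum_map_pow_finalPieces {R : Type*} [CommSemiring R] {x : R} {m : ℕ}
    (hx : x + x ^ (m + 1) + x = 1) (d j : ℕ) :
    ((finalPieces m d j).map (x ^ ·)).sum = x ^ j := by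
  induction j using finalPieces.induct (m := m) (d := d) with
  | case1 j h ih_short ih_long =>
    rw [finalPieces, dif_pos h]
    simp only [Multiset.map_add, Multiset.sum_add, ih_short, ih_long]
    calc x ^ (j + 1) + x ^ (j + m + 1) + x ^ (j + 1) = x ^ j * (x + x ^ (m + 1) + x) := by ring
      _ = x ^ j := by rw [hx, mul_one]
  | case2 j h =>
    simp [finalPieces, h]

theorem card_mul_pow_le_sum_map_pow {R : Type*} [Semiring R] [PartialOrder R] [IsOrderedRing R]
    {x : R} (hx₀ : 0 ≤ x) (hx₁ : x ≤ 1) {s : Multiset ℕ} {N : ℕ} (hs : ∀ k ∈ s, k ≤ N) :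
    (Multiset.card s : R) * x ^ N ≤ (s.map (x ^ ·)).sum := by
  rw [← nsmul_eq_mul, ← Multiset.card_map (x ^ ·)]
  refine Multiset.card_nsmul_le_sum fun y hy => ?_
  obtain ⟨k, hk, rfl⟩ := Multiset.mem_map.mp hy
  exact pow_le_pow_of_le_one hx₀ hx₁ (hs k hk)

theorem card_finalPieces_le_general (m : ℕ) (δ : ℝ) (hδ : 0 < δ)
    (hδm : δ * (2 + δ) ^ m = 1) (d : ℕ) :
    (Multiset.card (finalPieces m d 0) : ℝ) ≤ (2 + δ) ^ (d + m) := by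
  set x := (2 + δ)⁻¹ with hx_def
  have hx₀ : 0 < x := by positivity
  have hx₁ : x ≤ 1 := inv_le_one_of_one_le₀ (by linarith)
  have hmass : x + x ^ (m + 1) + x = 1 := by
    have hxm : x ^ m = δ := by
      rw [hx_def, inv_pow, inv_eq_of_mul_eq_one_left hδm]
    rw [pow_succ, hxm, hx_def]
    field_simp
    ring
  have hcount := card_mul_pow_le_sum_map_pow (s := finalPieces m d 0) hx₀.le hx₁
    fun _ hk => le_of_mem_finalPieces (Nat.zero_le _) hk
  rw [sum_map_pow_finalPieces hmass, pow_zero, hx_def, inv_pow,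
    mul_inv_le_iff₀ (by positivity), one_mul] at hcount
  exact hcount

/-- With `δ > 0` satisfying `(2+δ)^m = 1/δ`, the total number of pieces produced
by recursively partitioning an interval of length `(2+δ)^ℓ` (splitting every
piece of length greater than `(2+δ)^{ℓ-d}`) is at most `(2+δ)^{d+m}`. -/
theorem card_finalPieces_le (m : ℕ) (hm : 1 ≤ m) (δ : ℝ) (hδ : 0 < δ)
    (hδm : δ * (2 + δ) ^ m = 1) (d : ℕ) :
    (Multiset.card (finalPieces m d 0) : ℝ) ≤ (2 + δ) ^ (d + m) :=
  card_finalPieces_le_general m δ hδ hδm d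
end
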